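/- arXiv:2306.05408 — 4 statements merged into one kernel-verified Lean document; each statement's English description precedes it below -/
import Mathlib

section
/- Let 1 ≤ p, q < ∞ and let g be holomorphic on 𝔻. The multiplication operator M_g f = g·f is bounded on RM(p,q), i.e., there exists C > 0 such that ρ_{p,q}(g·f) ≤ C ρ_{p,q}(f) for all f ∈ RM(p,q), if and only if g ∈ H^∞. -/
open MeasureTheory Complex Set
open scoped Real ENNReal

noncomputable section

/-- The open unit disc in `ℂ`. -/
def unitDisc : Set ℂ := Metric.ball 0 1

/-- The normalized area Lebesgue measure on `ℂ`. -/
def mA : Measure ℂ := (ENNReal.ofReal Real.pi)⁻¹ • (volume : Measure ℂ)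

/-- The cone-like region `Γ_β(ξ) = {|z| < β} ∪ ⋃_{|z|<β} [z, ξ)`. -/
def coneRegion (β : ℝ) (ξ : ℂ) : Set ℂ :=
  {z : ℂ | ‖z‖ < β} ∪
    ⋃ z ∈ {w : ℂ | ‖w‖ < β},
      {w : ℂ | ∃ t : ℝ, 0 ≤ t ∧ t < 1 ∧ w = (1 - t) * z + t * ξ}

/-- The pseudohyperbolic disc `Δ(α,η)`. -/
def pDisc (α : ℂ) (η : ℝ) : Set ℂ :=
  {z ∈ unitDisc | ‖(α - z) / (1 - (starRingEnd ℂ) α * z)‖ < η}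

/-- The Euclidean disc `Δ_η(α) = {z : |z - α| < η(1-|α|)}`. -/
def eDisc (η : ℝ) (α : ℂ) : Set ℂ :=
  {z : ℂ | ‖z - α‖ < η * (1 - ‖α‖)}

/-- The tent-space expression of `f` with aperture `β`, restricted to a set `G`:
`(∫_𝕋 (∫_{Γ_β(ξ) ∩ G} |f(z)|^p dm(z)/(1-|z|))^{q/p} |dξ|)^{1/q}`. -/
def tentNormOn (p q β : ℝ) (G : Set ℂ) (f : ℂ → ℂ) : ℝ≥0∞ :=
  (∫⁻ θ in Set.Ioo 0 (2 * Real.pi),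
      (∫⁻ z in coneRegion β (Complex.exp (θ * Complex.I)) ∩ G,
          ENNReal.ofReal (‖f z‖ ^ p / (1 - ‖z‖)) ∂mA) ^ (q / p))
    ^ (1 / q)

/-- The tent space (quasi-)norm `‖f‖_{T_p^q}` (aperture `1/2`). -/
def tentNorm (p q : ℝ) (f : ℂ → ℂ) : ℝ≥0∞ := tentNormOn p q (1/2) Set.univ f

/-- `ρ_{p,q}(f) = ((1/2π)∫_0^{2π} (∫_0^1 |f(re^{iθ})|^p dr)^{q/p} dθ)^{1/q}`. -/
def rho (p q : ℝ) (f : ℂ → ℂ) : ℝ≥0∞ :=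
  ((ENNReal.ofReal (2 * Real.pi))⁻¹ *
      ∫⁻ θ in Set.Ioo 0 (2 * Real.pi),
        (∫⁻ r in Set.Ioo (0:ℝ) 1,
            ENNReal.ofReal (‖f ((r : ℂ) * Complex.exp (θ * Complex.I))‖ ^ p))
          ^ (q / p)) ^ (1 / q)

/-- Membership in `RM(p,q)`. -/
def memRM (p q : ℝ) (f : ℂ → ℂ) : Prop :=
  DifferentiableOn ℂ f unitDisc ∧ rho p q f < ⊤

/-- The Pommerenke integration operator `T_g f(z) = ∫_0^z f(ζ) g'(ζ) dζ`. -/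
def Tg (g f : ℂ → ℂ) (z : ℂ) : ℂ :=
  z * ∫ t in Set.Ioo (0:ℝ) 1, f ((t : ℂ) * z) * deriv g ((t : ℂ) * z)

/-- The companion operator `S_g f(z) = ∫_0^z f'(ζ) g(ζ) dζ`. -/
def Sg (g f : ℂ → ℂ) (z : ℂ) : ℂ :=
  z * ∫ t in Set.Ioo (0:ℝ) 1, deriv f ((t : ℂ) * z) * g ((t : ℂ) * z)

/-- Membership in the Bloch space `𝓑`. -/
def memBloch (g : ℂ → ℂ) : Prop :=
  DifferentiableOn ℂ g unitDisc ∧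
    ∃ M : ℝ, ∀ z ∈ unitDisc, ‖deriv g z‖ * (1 - ‖z‖ ^ 2) ≤ M

/-- Membership in `H^∞`. -/
def memHinf (g : ℂ → ℂ) : Prop :=
  DifferentiableOn ℂ g unitDisc ∧ ∃ M : ℝ, ∀ z ∈ unitDisc, ‖g z‖ ≤ M

/-- The set `E_λ(α) = {z ∈ Δ_η(α) : |f(z)|^p ≥ λ |f(α)|^p}`. -/
def Eset (p η : ℝ) (f : ℂ → ℂ) (lam : ℝ) (α : ℂ) : Set ℂ :=
  {z ∈ eDisc η α | lam * ‖f α‖ ^ p ≤ ‖f z‖ ^ p}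

/-- The average `B_λ f(α) = (1/m(E_λ(α))) ∫_{E_λ(α)} |f(z)|^p dm(z)` (in `ℝ≥0∞`). -/
def Bavg (p η : ℝ) (f : ℂ → ℂ) (lam : ℝ) (α : ℂ) : ℝ≥0∞ :=
  (∫⁻ z in Eset p η f lam α, ENNReal.ofReal (‖f z‖ ^ p) ∂mA) /
    mA (Eset p η f lam α)

/-- The derivative variant `E_λ(α) = {z ∈ Δ_η(α) : (1-|z|)^p |f'(z)|^p ≥ λ (1-|α|)^p |f'(α)|^p}`. -/
def EsetD (p η : ℝ) (f : ℂ → ℂ) (lam : ℝ) (α : ℂ) : Set ℂ :=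
  {z ∈ eDisc η α |
    lam * ((1 - ‖α‖) ^ p * ‖deriv f α‖ ^ p) ≤
      (1 - ‖z‖) ^ p * ‖deriv f z‖ ^ p}

/-- The derivative variant of `B_λ f(α)` (in `ℝ≥0∞`). -/
def BavgD (p η : ℝ) (f : ℂ → ℂ) (lam : ℝ) (α : ℂ) : ℝ≥0∞ :=
  (∫⁻ z in EsetD p η f lam α,
      ENNReal.ofReal (‖deriv f z‖ ^ p * (1 - ‖z‖) ^ p) ∂mA) /
    mA (EsetD p η f lam α)

/-- The test functions `f_α(z) = (1-|α|²)^{γ-1/p-1/q} / (1-ᾱz)^γ`. -/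
def testFun (p q γ : ℝ) (α z : ℂ) : ℂ :=
  (((1 - ‖α‖ ^ 2) ^ (γ - 1/p - 1/q) : ℝ) : ℂ) /
    (1 - (starRingEnd ℂ) α * z) ^ (γ : ℂ)

/-! Boundedness of `g` suffices because `ρ_{p,q}` is an iterated `L^p(dr)`–`L^q(dθ/2π)` norm, hence
monotone and homogeneous. Conversely, point evaluation is bounded on `RM(p,q)`: Cauchy's formula on
the circles of radius `r ∈ (1 - d, 1)`, `d = (1 - |z|)/2`, integrated in `r`, followed by Jensen's
inequality in `r` and then in `θ`, gives `d² |f(z)| ≤ ρ_{p,q}(f)`. Iterating the bound for `M_g`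
gives `ρ_{p,q}(gⁿ) ≤ Cⁿ`, so `d² |g(z)|ⁿ ≤ Cⁿ` for every `n`, whence `|g(z)| ≤ C`. -/

open ProbabilityTheory
open scoped NNReal

theorem lintegral_le_eLpNorm {α : Type*} [MeasurableSpace α] {μ : Measure α}
    [IsProbabilityMeasure μ] {p : ℝ≥0∞} (hp : 1 ≤ p) (F : α → ℝ≥0∞) :
    ∫⁻ a, F a ∂μ ≤ eLpNorm F p μ := by
  -- `F` need not be measurable: pass to a measurable minorant with the same integral.
  obtain ⟨G, hGm, hGF, hG⟩ := exists_measurable_le_lintegral_eq μ F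
  calc ∫⁻ a, F a ∂μ = eLpNorm G 1 μ := by rw [hG, eLpNorm_one_eq_lintegral_enorm]; rfl
    _ ≤ eLpNorm G p μ * μ univ ^ (1 / (1 : ℝ≥0∞).toReal - 1 / p.toReal) :=
      eLpNorm_le_eLpNorm_mul_rpow_measure_univ hp hGm.aestronglyMeasurable
    _ ≤ eLpNorm F p μ := by
      rw [measure_univ, ENNReal.one_rpow, mul_one]
      exact eLpNorm_mono_enorm hGF

theorem isProbabilityMeasure_cond_Ioo {a b : ℝ} (h : a < b) :
    IsProbabilityMeasure volume[|Ioo a b] :=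
  cond_isProbabilityMeasure_of_finite (by simp [h]) (by simp)

theorem ofReal_mul_enorm_le_lintegral_circleMap {E : Type*}
    [NormedAddCommGroup E] [NormedSpace ℂ E] [CompleteSpace E] {f : ℂ → E} {c w : ℂ} {R : ℝ}
    (hf : DifferentiableOn ℂ f (Metric.closedBall c R)) (hw : w ∈ Metric.ball c R) :
    ENNReal.ofReal (2 * π * (R - dist w c)) * ‖f w‖ₑ
      ≤ ENNReal.ofReal R * ∫⁻ θ in Ioc 0 (2 * π), ‖f (circleMap c R θ)‖ₑ := by
  have hR : 0 < R := Metric.pos_of_mem_ball hw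
  have hwc : dist w c < R := hw
  have hpt : ∀ θ, ENNReal.ofReal (R - dist w c) *
      ‖deriv (circleMap c R) θ • (circleMap c R θ - w)⁻¹ • f (circleMap c R θ)‖ₑ
        ≤ ENNReal.ofReal R * ‖f (circleMap c R θ)‖ₑ := by
    intro θ
    have hdist : R - dist w c ≤ ‖circleMap c R θ - w‖ := by
      have := dist_triangle (circleMap c R θ) w c
      rw [dist_eq_norm, dist_eq_norm (circleMap c R θ), circleMap_sub_center, norm_circleMap_zero,
        abs_of_pos hR] at this
      linarith
    have hpos : 0 < ‖circleMap c R θ - w‖ := by linarith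
    rw [← ofReal_norm, ← ofReal_norm, ← ENNReal.ofReal_mul (by linarith),
      ← ENNReal.ofReal_mul hR.le, norm_smul, norm_smul, norm_inv, deriv_circleMap, norm_mul,
      norm_circleMap_zero, abs_of_pos hR, norm_I, mul_one]
    refine ENNReal.ofReal_le_ofReal ?_
    calc (R - dist w c) * (R * (‖circleMap c R θ - w‖⁻¹ * ‖f (circleMap c R θ)‖))
        = R * ((R - dist w c) / ‖circleMap c R θ - w‖) * ‖f (circleMap c R θ)‖ := by ring
      _ ≤ R * 1 * ‖f (circleMap c R θ)‖ := by gcongr; exact (div_le_one hpos).2 hdist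
      _ = R * ‖f (circleMap c R θ)‖ := by ring
  calc ENNReal.ofReal (2 * π * (R - dist w c)) * ‖f w‖ₑ
      = ENNReal.ofReal (R - dist w c) * ‖∮ z in C(c, R), (z - w)⁻¹ • f z‖ₑ := by
        have h2πI : ‖(2 * π * I : ℂ)‖ₑ = ENNReal.ofReal (2 * π) := by
          rw [← ofReal_norm]; simp [abs_of_pos Real.pi_pos]
        rw [hf.circleIntegral_sub_inv_smul hw, enorm_smul, h2πI, ENNReal.ofReal_mul (by positivity)]
        ring
    _ ≤ ENNReal.ofReal (R - dist w c) * ∫⁻ θ in Ioc 0 (2 * π),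
          ‖deriv (circleMap c R) θ • (circleMap c R θ - w)⁻¹ • f (circleMap c R θ)‖ₑ := by
        rw [circleIntegral, intervalIntegral.integral_of_le (by positivity)]
        gcongr
        exact enorm_integral_le_lintegral_enorm _
    _ = ∫⁻ θ in Ioc 0 (2 * π), ENNReal.ofReal (R - dist w c) *
          ‖deriv (circleMap c R) θ • (circleMap c R θ - w)⁻¹ • f (circleMap c R θ)‖ₑ :=
        (lintegral_const_mul' _ _ ENNReal.ofReal_ne_top).symm
    _ ≤ ∫⁻ θ in Ioc 0 (2 * π), ENNReal.ofReal R * ‖f (circleMap c R θ)‖ₑ := lintegral_mono hpt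
    _ = ENNReal.ofReal R * ∫⁻ θ in Ioc 0 (2 * π), ‖f (circleMap c R θ)‖ₑ :=
        lintegral_const_mul' _ _ ENNReal.ofReal_ne_top

theorem le_of_forall_mul_pow_le_pow {a x y : ℝ} (ha : 0 < a) (hy : 0 < y)
    (h : ∀ n : ℕ, a * x ^ n ≤ y ^ n) : x ≤ y := by
  by_contra! hyx
  obtain ⟨n, hn⟩ := pow_unbounded_of_one_lt a⁻¹ ((one_lt_div hy).2 hyx)
  rw [div_pow, lt_div_iff₀ (by positivity), inv_mul_lt_iff₀ ha] at hn
  exact (h n).not_gt hn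

def radialLpNorm (p : ℝ) (f : ℂ → ℂ) (θ : ℝ) : ℝ≥0∞ :=
  eLpNorm (fun r : ℝ => f (r * exp (θ * I))) (ENNReal.ofReal p) volume[|Ioo 0 1]

theorem rho_eq_eLpNorm {p q : ℝ} (hp : 0 < p) (hq : 0 < q) (f : ℂ → ℂ) :
    rho p q f = eLpNorm (radialLpNorm p f) (ENNReal.ofReal q) volume[|Ioo 0 (2 * π)] := by
  simp only [rho, radialLpNorm,
    eLpNorm_eq_lintegral_rpow_enorm_toReal (ENNReal.ofReal_pos.2 hp).ne' ENNReal.ofReal_ne_top,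
    eLpNorm_eq_lintegral_rpow_enorm_toReal (ENNReal.ofReal_pos.2 hq).ne' ENNReal.ofReal_ne_top,
    ENNReal.toReal_ofReal hp.le, ENNReal.toReal_ofReal hq.le, ProbabilityTheory.cond,
    lintegral_smul_measure, Real.volume_Ioo, sub_zero, enorm_eq_self, ← ENNReal.rpow_mul,
    ENNReal.ofReal_one, inv_one, one_smul, smul_eq_mul, one_div_mul_eq_div]
  congr 3 with θ
  congr 2 with r
  rw [← ofReal_norm, ENNReal.ofReal_rpow_of_nonneg (norm_nonneg _) hp.le]

theorem ofReal_mul_exp_mem_unitDisc {r : ℝ} (hr : r ∈ Ioo 0 1) (θ : ℝ) :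
    (r : ℂ) * exp (θ * I) ∈ unitDisc := by
  simp [unitDisc, norm_exp_ofReal_mul_I, abs_of_pos hr.1, hr.2]

theorem rho_le_mul_rho {p q : ℝ} (hp : 0 < p) (hq : 0 < q) {f h : ℂ → ℂ} {M : ℝ≥0}
    (hfh : ∀ z ∈ unitDisc, ‖h z‖ ≤ M * ‖f z‖) : rho p q h ≤ M * rho p q f := by
  rw [rho_eq_eLpNorm hp hq, rho_eq_eLpNorm hp hq]
  refine eLpNorm_le_mul_eLpNorm_of_ae_le_mul' (ae_of_all _ fun θ => ?_) _
  refine eLpNorm_le_mul_eLpNorm_of_ae_le_mul' ?_ _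
  filter_upwards [ae_cond_mem measurableSet_Ioo] with r hr
  have := hfh _ (ofReal_mul_exp_mem_unitDisc hr θ)
  rw [enorm_eq_nnnorm, enorm_eq_nnnorm, ← ENNReal.coe_mul, ENNReal.coe_le_coe, ← NNReal.coe_le_coe]
  exact_mod_cast this

theorem rho_one (p q : ℝ) : rho p q (fun _ => 1) = 1 := by
  simp only [rho, norm_one, Real.one_rpow, ENNReal.ofReal_one, setLIntegral_const, one_mul,
    Real.volume_Ioo, sub_zero, ENNReal.one_rpow]
  rw [ENNReal.inv_mul_cancel (by positivity) ENNReal.ofReal_ne_top, ENNReal.one_rpow]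

theorem lintegral_polar_le_rho {p q : ℝ} (hp : 1 ≤ p) (hq : 1 ≤ q) (f : ℂ → ℂ) :
    ∫⁻ θ in Ioo 0 (2 * π), ∫⁻ r : ℝ in Ioo 0 1, ‖f (r * exp (θ * I))‖ₑ
      ≤ ENNReal.ofReal (2 * π) * rho p q f := by
  have := isProbabilityMeasure_cond_Ioo (zero_lt_one' ℝ)
  have := isProbabilityMeasure_cond_Ioo Real.two_pi_pos
  have h2π : ENNReal.ofReal (2 * π) ≠ 0 := by positivity
  calc ∫⁻ θ in Ioo 0 (2 * π), ∫⁻ r : ℝ in Ioo 0 1, ‖f (r * exp (θ * I))‖ₑ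
      = ENNReal.ofReal (2 * π) * ∫⁻ θ, ∫⁻ r : ℝ, ‖f (r * exp (θ * I))‖ₑ ∂volume[|Ioo 0 1]
          ∂volume[|Ioo 0 (2 * π)] := by
        simp only [ProbabilityTheory.cond, lintegral_smul_measure, Real.volume_Ioo, sub_zero,
          ENNReal.ofReal_one, inv_one, one_smul, smul_eq_mul, ← mul_assoc,
          ENNReal.mul_inv_cancel h2π ENNReal.ofReal_ne_top, one_mul]
    _ ≤ ENNReal.ofReal (2 * π) * ∫⁻ θ, radialLpNorm p f θ ∂volume[|Ioo 0 (2 * π)] := by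
        gcongr with θ
        rw [radialLpNorm, ← eLpNorm_enorm]
        exact lintegral_le_eLpNorm (ENNReal.one_le_ofReal.2 hp) _
    _ ≤ ENNReal.ofReal (2 * π) * rho p q f := by
        rw [rho_eq_eLpNorm (by linarith) (by linarith)]
        gcongr
        exact lintegral_le_eLpNorm (ENNReal.one_le_ofReal.2 hq) _

theorem ofReal_mul_enorm_le_lintegral_polar {f : ℂ → ℂ} (hf : DifferentiableOn ℂ f unitDisc)
    {z : ℂ} (hz : z ∈ unitDisc) :
    ENNReal.ofReal (2 * π * ((1 - ‖z‖) / 2) ^ 2) * ‖f z‖ₑ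
      ≤ ∫⁻ θ in Ioo 0 (2 * π), ∫⁻ r : ℝ in Ioo 0 1, ‖f (r * exp (θ * I))‖ₑ := by
  set d := (1 - ‖z‖) / 2 with hd
  have hz1 : ‖z‖ < 1 := mem_ball_zero_iff.1 hz
  have hd0 : 0 < d := by linarith
  have hd1 : d ≤ 1 / 2 := by linarith [norm_nonneg z]
  have hcircle : ∀ r ∈ Ioo (1 - d) 1, ENNReal.ofReal (2 * π * d) * ‖f z‖ₑ
      ≤ ∫⁻ θ in Ioo 0 (2 * π), ‖f (r * exp (θ * I))‖ₑ := by
    intro r hr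
    have hr0 : 0 < r := by linarith [hr.1]
    have hcauchy := ofReal_mul_enorm_le_lintegral_circleMap (c := 0) (R := r)
      (hf.mono (Metric.closedBall_subset_ball hr.2)) (mem_ball_zero_iff.2 (by linarith [hr.1]))
    rw [dist_zero_right, ← setLIntegral_congr Ioo_ae_eq_Ioc] at hcauchy
    simp only [circleMap_zero] at hcauchy
    calc ENNReal.ofReal (2 * π * d) * ‖f z‖ₑ
        ≤ ENNReal.ofReal (2 * π * (r - ‖z‖)) * ‖f z‖ₑ := by
          gcongr; linarith [hr.1]
      _ ≤ ENNReal.ofReal r * ∫⁻ θ in Ioo 0 (2 * π), ‖f (r * exp (θ * I))‖ₑ := hcauchy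
      _ ≤ ∫⁻ θ in Ioo 0 (2 * π), ‖f (r * exp (θ * I))‖ₑ := by
          apply mul_le_of_le_one_left' (ENNReal.ofReal_le_one.2 hr.2.le)
  have hmeas : AEMeasurable (Function.uncurry fun (r θ : ℝ) => ‖f (r * exp (θ * I))‖ₑ)
      ((volume.restrict (Ioo (1 - d) 1)).prod (volume.restrict (Ioo 0 (2 * π)))) := by
    rw [Measure.prod_restrict]
    refine ContinuousOn.aemeasurable ?_ (measurableSet_Ioo.prod measurableSet_Ioo)
    refine continuous_enorm.comp_continuousOn (hf.continuousOn.comp (by fun_prop) ?_)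
    rintro ⟨r, θ⟩ ⟨hr, -⟩
    exact ofReal_mul_exp_mem_unitDisc ⟨by linarith [hr.1], hr.2⟩ θ
  calc ENNReal.ofReal (2 * π * d ^ 2) * ‖f z‖ₑ
      = ∫⁻ _ in Ioo (1 - d) 1, ENNReal.ofReal (2 * π * d) * ‖f z‖ₑ := by
        rw [setLIntegral_const, Real.volume_Ioo, sub_sub_cancel, mul_comm _ (ENNReal.ofReal d),
          ← mul_assoc, ← ENNReal.ofReal_mul hd0.le]
        ring_nf
    _ ≤ ∫⁻ r in Ioo (1 - d) 1, ∫⁻ θ in Ioo 0 (2 * π), ‖f (r * exp (θ * I))‖ₑ :=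
        setLIntegral_mono' measurableSet_Ioo hcircle
    _ = ∫⁻ θ in Ioo 0 (2 * π), ∫⁻ r : ℝ in Ioo (1 - d) 1, ‖f (r * exp (θ * I))‖ₑ :=
        lintegral_lintegral_swap hmeas
    _ ≤ ∫⁻ θ in Ioo 0 (2 * π), ∫⁻ r : ℝ in Ioo 0 1, ‖f (r * exp (θ * I))‖ₑ := by
        gcongr with θ
        linarith

theorem ofReal_mul_enorm_le_rho {p q : ℝ} (hp : 1 ≤ p) (hq : 1 ≤ q) {f : ℂ → ℂ}
    (hf : DifferentiableOn ℂ f unitDisc) {z : ℂ} (hz : z ∈ unitDisc) :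
    ENNReal.ofReal (((1 - ‖z‖) / 2) ^ 2) * ‖f z‖ₑ ≤ rho p q f := by
  rw [← ENNReal.mul_le_mul_iff_right (by positivity : ENNReal.ofReal (2 * π) ≠ 0)
    ENNReal.ofReal_ne_top, ← mul_assoc, ← ENNReal.ofReal_mul Real.two_pi_pos.le]
  exact (ofReal_mul_enorm_le_lintegral_polar hf hz).trans (lintegral_polar_le_rho hp hq f)

theorem rho_pow_le {p q C : ℝ} {g : ℂ → ℂ} (hg : DifferentiableOn ℂ g unitDisc)
    (hb : ∀ f : ℂ → ℂ, memRM p q f →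
      rho p q (fun z => g z * f z) ≤ ENNReal.ofReal C * rho p q f) (n : ℕ) :
    rho p q (fun z => g z ^ n) ≤ ENNReal.ofReal C ^ n := by
  induction n with
  | zero => simp only [pow_zero, rho_one, le_refl]
  | succ n ih =>
    have hmem : memRM p q (fun z => g z ^ n) :=
      ⟨hg.pow n, ih.trans_lt (ENNReal.pow_lt_top ENNReal.ofReal_lt_top)⟩
    calc rho p q (fun z => g z ^ (n + 1)) = rho p q (fun z => g z * g z ^ n) := by
          simp only [pow_succ']
      _ ≤ ENNReal.ofReal C * rho p q (fun z => g z ^ n) := hb _ hmem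
      _ ≤ ENNReal.ofReal C ^ (n + 1) := by rw [pow_succ']; gcongr

theorem norm_le_of_rho_mul_le {p q C : ℝ} (hp : 1 ≤ p) (hq : 1 ≤ q) (hC : 0 < C) {g : ℂ → ℂ}
    (hg : DifferentiableOn ℂ g unitDisc)
    (hb : ∀ f : ℂ → ℂ, memRM p q f →
      rho p q (fun z => g z * f z) ≤ ENNReal.ofReal C * rho p q f)
    {z : ℂ} (hz : z ∈ unitDisc) : ‖g z‖ ≤ C := by
  have hz1 : ‖z‖ < 1 := mem_ball_zero_iff.1 hz
  refine le_of_forall_mul_pow_le_pow (by nlinarith : 0 < ((1 - ‖z‖) / 2) ^ 2) hC fun n => ?_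
  have := (ofReal_mul_enorm_le_rho hp hq (hg.pow n) hz).trans (rho_pow_le hg hb n)
  rwa [← ofReal_norm, Pi.pow_apply, norm_pow, ← ENNReal.ofReal_mul (by positivity),
    ← ENNReal.ofReal_pow hC.le, ENNReal.ofReal_le_ofReal_iff (by positivity)] at this

/-- `M_g` is bounded on `RM(p,q)` iff `g ∈ H^∞`. -/
theorem Mg_bounded_iff_Hinf (p q : ℝ) (hp : 1 ≤ p) (hq : 1 ≤ q)
    (g : ℂ → ℂ) (hg : DifferentiableOn ℂ g unitDisc) :
    (∃ C > (0:ℝ), ∀ f : ℂ → ℂ, memRM p q f →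
        rho p q (fun z => g z * f z) ≤ ENNReal.ofReal C * rho p q f) ↔ memHinf g := by
  constructor
  · rintro ⟨C, hC, hb⟩
    exact ⟨hg, C, fun z hz => norm_le_of_rho_mul_le hp hq hC hg hb hz⟩
  · rintro ⟨-, M, hM⟩
    have hM1 : (0 : ℝ) < max M 1 := lt_max_of_lt_right one_pos
    refine ⟨max M 1, hM1, fun f _ => rho_le_mul_rho (M := (max M 1).toNNReal) (by linarith)
      (by linarith) fun z hz => ?_⟩
    rw [norm_mul, Real.coe_toNNReal _ hM1.le]
    gcongr
    exact (hM z hz).trans (le_max_left M 1)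
end
end

section
/- Let 1 ≤ p < ∞, η ∈ (0,1), ε > 0, let f be holomorphic on 𝔻, and set 𝒜 = {α ∈ 𝔻 : |f(α)|^p < (ε / m(Δ_η(α))) ∫_{Δ_η(α)} |f(z)|^p dm(z)}. Then there exist a constant C₁ = C₁(η) > 0 and β ∈ (1/2, 1), both depending only on η (and p), such that for every ξ ∈ 𝕋, ∫_{𝒜 ∩ Γ_{1/2}(ξ)} |f(z)|^p dm(z)/(1−|z|) ≤ ε C₁ ∫_{Γ_β(ξ)} |f(z)|^p dm(z)/(1−|z|). -/
open MeasureTheory Complex Set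
open scoped Real ENNReal

noncomputable section

/-!
For `α ∈ 𝒜`, the defining inequality and `m(Δ_η(α)) = η² (1 - |α|)²` give
`|f(α)|^p / (1 - |α|) ≤ ε η⁻² (1 - |α|)⁻³ ∫_{Δ_η(α)} |f|^p dm`. Integrating over `Γ_{1/2}(ξ)` and
exchanging the integrals, a point `w` is charged only by those `α` with `w ∈ Δ_η(α)`. These satisfy
`1 - |α| ≍ 1 - |w|` and `|α - w| ≲ 1 - |w|`, so their total weight `∫ (1 - |α|)⁻³ dm(α)` is
`≲ (1 - |w|)⁻¹`. Moreover such `w` lie in a Stolz angle `|ξ - w| < K (1 - |w|)` at `ξ`, and every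
Stolz angle at `ξ` is contained in `Γ_β(ξ)` once `β` is close enough to `1`.
-/

open ComplexConjugate

section Tonelli

variable {X Y : Type*} [MeasurableSpace X] [MeasurableSpace Y] {μ : Measure X} {ν : Measure Y}
  {U : Set (X × Y)}

lemma setLIntegral_prodMk_preimage (hU : MeasurableSet U) (G : Y → ℝ≥0∞) (x : X) :
    ∫⁻ y in Prod.mk x ⁻¹' U, G y ∂ν = ∫⁻ y, U.indicator (fun q => G q.2) (x, y) ∂ν := by
  rw [← lintegral_indicator (measurable_prodMk_left hU)]
  exact lintegral_congr fun y => indicator_comp_right (g := fun q : X × Y => G q.2) (Prod.mk x)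

lemma measurable_setLIntegral_prodMk_preimage [SFinite ν] (hU : MeasurableSet U) {G : Y → ℝ≥0∞}
    (hG : Measurable G) : Measurable fun x => ∫⁻ y in Prod.mk x ⁻¹' U, G y ∂ν := by
  simp_rw [setLIntegral_prodMk_preimage hU]
  exact ((hG.comp measurable_snd).indicator hU).lintegral_prod_right'

lemma lintegral_mul_setLIntegral_prodMk_preimage [SFinite μ] [SFinite ν] (hU : MeasurableSet U)
    {κ : X → ℝ≥0∞} {G : Y → ℝ≥0∞} (hκ : Measurable κ) (hG : Measurable G) :
    ∫⁻ x, κ x * ∫⁻ y in Prod.mk x ⁻¹' U, G y ∂ν ∂μ =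
      ∫⁻ y, (∫⁻ x in (·, y) ⁻¹' U, κ x ∂μ) * G y ∂ν := by
  set F : X × Y → ℝ≥0∞ := U.indicator fun q => κ q.1 * G q.2
  have hF : Measurable F := ((hκ.comp measurable_fst).mul (hG.comp measurable_snd)).indicator hU
  calc ∫⁻ x, κ x * ∫⁻ y in Prod.mk x ⁻¹' U, G y ∂ν ∂μ = ∫⁻ x, ∫⁻ y, F (x, y) ∂ν ∂μ := by
        refine lintegral_congr fun x => ?_
        have hGx : Measurable fun y => U.indicator (fun q => G q.2) (x, y) :=
          ((hG.comp measurable_snd).indicator hU).comp measurable_prodMk_left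
        rw [setLIntegral_prodMk_preimage hU, ← lintegral_const_mul _ hGx]
        exact lintegral_congr fun y =>
          (indicator_mul_right U (fun q => κ q.1) (fun q => G q.2) (i := (x, y))).symm
    _ = ∫⁻ y, ∫⁻ x, F (x, y) ∂μ ∂ν := lintegral_lintegral_swap hF.aemeasurable
    _ = ∫⁻ y, (∫⁻ x in (·, y) ⁻¹' U, κ x ∂μ) * G y ∂ν := by
        refine lintegral_congr fun y => ?_
        rw [← lintegral_mul_const _ hκ, ← lintegral_indicator (measurable_prodMk_right hU)]
        exact lintegral_congr fun x =>
          (indicator_comp_right (g := fun q : X × Y => κ q.1 * G q.2) (·, y)).symm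

end Tonelli

lemma ContinuousOn.measurable_indicator_comp {X E β : Type*} [TopologicalSpace X]
    [MeasurableSpace X] [OpensMeasurableSpace X] [TopologicalSpace E] [MeasurableSpace E]
    [BorelSpace E] [Zero E] [MeasurableSpace β] [Zero β] {s : Set X} {f : X → E}
    (hf : ContinuousOn f s) (hs : MeasurableSet s) {h : E → β} (hh : Measurable h) :
    Measurable (s.indicator fun x => h (f x)) := by
  classical
  have : s.indicator (fun x => h (f x)) = s.indicator fun x => h (s.piecewise f 0 x) :=
    indicator_congr fun x hx => by rw [piecewise_eq_of_mem _ _ _ hx]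
  rw [this]
  exact (hh.comp (hf.measurable_piecewise continuousOn_const hs)).indicator hs

lemma mem_coneRegion_iff {β : ℝ} {ξ w : ℂ} :
    w ∈ coneRegion β ξ ↔ ∃ t : ℝ, 0 ≤ t ∧ t < 1 ∧ ‖w - t * ξ‖ < (1 - t) * β := by
  have hnorm : ∀ t : ℝ, t < 1 → ‖1 - (t : ℂ)‖ = 1 - t := fun t ht => by
    rw [← ofReal_one, ← ofReal_sub, norm_real, Real.norm_of_nonneg (by linarith)]
  simp only [coneRegion, mem_union, mem_iUnion, exists_prop]
  constructor
  · rintro (h | ⟨z, hz, t, ht0, ht1, rfl⟩)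
    · exact ⟨0, le_rfl, one_pos, by simpa using h⟩
    · refine ⟨t, ht0, ht1, ?_⟩
      rw [add_sub_cancel_right, norm_mul, hnorm t ht1]
      exact mul_lt_mul_of_pos_left hz (by linarith)
  · rintro ⟨t, ht0, ht1, h⟩
    have hne : 1 - (t : ℂ) ≠ 0 := by
      rw [← ofReal_one, ← ofReal_sub, ofReal_ne_zero]; linarith
    refine Or.inr ⟨(w - t * ξ) / (1 - t), ?_, t, ht0, ht1, by field_simp; ring⟩
    show ‖_‖ < β
    rw [norm_div, hnorm t ht1, div_lt_iff₀ (by linarith)]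
    linarith

lemma isOpen_coneRegion (β : ℝ) (ξ : ℂ) : IsOpen (coneRegion β ξ) := by
  have : coneRegion β ξ = ⋃ t ∈ Ico (0 : ℝ) 1, Metric.ball (t * ξ) ((1 - t) * β) := by
    ext w
    simp [mem_coneRegion_iff, dist_eq, and_assoc]
  rw [this]
  exact isOpen_biUnion fun _ _ => Metric.isOpen_ball

lemma norm_ofReal_mul_of_norm_eq_one {ξ : ℂ} (hξ : ‖ξ‖ = 1) {t : ℝ} (ht : 0 ≤ t) :
    ‖(t : ℂ) * ξ‖ = t := by
  rw [norm_mul, hξ, norm_real, Real.norm_of_nonneg ht, mul_one]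

lemma coneRegion_subset_unitDisc {β : ℝ} (hβ : β ≤ 1) {ξ : ℂ} (hξ : ‖ξ‖ = 1) :
    coneRegion β ξ ⊆ unitDisc := by
  intro w hw
  obtain ⟨t, ht0, ht1, h⟩ := mem_coneRegion_iff.1 hw
  have := norm_le_norm_add_norm_sub' w (t * ξ)
  rw [norm_ofReal_mul_of_norm_eq_one hξ ht0] at this
  rw [unitDisc, mem_ball_zero_iff]
  nlinarith

lemma norm_sub_le_of_mem_coneRegion {b : ℝ} (hb : b < 1) {ξ α : ℂ} (hξ : ‖ξ‖ = 1)
    (hα : α ∈ coneRegion b ξ) : ‖ξ - α‖ ≤ (1 + b) / (1 - b) * (1 - ‖α‖) := by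
  obtain ⟨t, ht0, ht1, h⟩ := mem_coneRegion_iff.1 hα
  have hsub : ‖ξ - α‖ ≤ (1 - t) + ‖α - t * ξ‖ := by
    rw [← norm_ofReal_mul_of_norm_eq_one hξ (by linarith : 0 ≤ 1 - t), ofReal_sub, ofReal_one]
    exact (norm_sub_le _ _).trans_eq' (by ring_nf)
  have hα' := norm_le_norm_add_norm_sub' α (t * ξ)
  rw [norm_ofReal_mul_of_norm_eq_one hξ ht0] at hα'
  have hb0 : 0 < b := by
    by_contra! hb0
    nlinarith [norm_nonneg (α - t * ξ)]
  rw [div_mul_eq_mul_div, le_div_iff₀ (by linarith)]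
  nlinarith [mul_le_mul_of_nonneg_right hsub (by linarith : 0 ≤ 1 - b)]

lemma norm_sub_ofReal_mul_sq {ξ : ℂ} (hξ : ‖ξ‖ = 1) (w : ℂ) (t : ℝ) :
    ‖w - t * ξ‖ ^ 2 = ‖ξ - w‖ ^ 2 + (1 - t) ^ 2 - 2 * (1 - t) * (1 - (w * conj ξ).re) := by
  have hξ2 : ξ.re ^ 2 + ξ.im ^ 2 = 1 := by
    have := Complex.sq_norm ξ; rw [hξ, normSq_apply] at this; linarith
  simp only [Complex.sq_norm, normSq_apply, sub_re, sub_im, mul_re, mul_im, ofReal_re, ofReal_im,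
    conj_re, conj_im]
  linear_combination ((1 - t) ^ 2 - 2 * (1 - t)) * hξ2

/-- With `t = 1 - K |ξ - w|`, the point `w` lies in the disc `|w - tξ| < (1 - t) β`; when that `t`
would be negative, `w` already lies in `{|w| < β}`. -/
lemma mem_coneRegion_of_norm_sub_lt {K β : ℝ} (hK : 0 < K) (hβ0 : 0 ≤ β) (hβ1 : β ≤ 1)
    (hKβ : K ^ 2 * (1 - β ^ 2) ≤ 1) {ξ w : ℂ} (hξ : ‖ξ‖ = 1) (hw : ‖ξ - w‖ < K * (1 - ‖w‖)) :
    w ∈ coneRegion β ξ := by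
  set d := ‖ξ - w‖ with hd
  have hdw : 1 - ‖w‖ ≤ d := by have := norm_sub_norm_le ξ w; rw [hξ] at this; linarith
  have hd0 : 0 < d := by nlinarith [norm_nonneg (ξ - w)]
  rw [mem_coneRegion_iff]
  rcases le_or_gt (K * d) 1 with hKd | hKd
  · refine ⟨1 - K * d, by linarith, by nlinarith, ?_⟩
    have hre : (w * conj ξ).re ≤ ‖w‖ := by
      simpa [hξ] using re_le_norm (w * conj ξ)
    apply lt_of_pow_lt_pow_left₀ 2 (mul_nonneg (by nlinarith) hβ0)
    rw [norm_sub_ofReal_mul_sq hξ, ← hd]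
    nlinarith [mul_le_mul_of_nonneg_left hre (by positivity : 0 ≤ K * d),
      mul_lt_mul_of_pos_right hw hd0, mul_le_mul_of_nonneg_right hKβ (sq_nonneg d)]
  · refine ⟨0, le_rfl, one_pos, ?_⟩
    have : 1 < K ^ 2 * (1 - ‖w‖) := by nlinarith [mul_lt_mul_of_pos_left hw hK]
    simp only [ofReal_zero, zero_mul, sub_zero, one_mul]
    by_contra! hβw
    nlinarith [mul_le_mul_of_nonneg_left (show 1 - ‖w‖ ≤ 1 - β ^ 2 by nlinarith) (sq_nonneg K)]

lemma one_sub_norm_mem_Ioo_of_mem_eDisc {η : ℝ} {α w : ℂ} (hw : w ∈ eDisc η α) :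
    1 - ‖w‖ ∈ Ioo ((1 - η) * (1 - ‖α‖)) ((1 + η) * (1 - ‖α‖)) := by
  have h : ‖w - α‖ < η * (1 - ‖α‖) := hw
  have := abs_le.1 (abs_norm_sub_norm_le w α)
  constructor <;> linarith

lemma eDisc_subset_unitDisc {η : ℝ} (hη : η ≤ 1) {α : ℂ} (hα : α ∈ unitDisc) :
    eDisc η α ⊆ unitDisc := by
  intro w hw
  have h := (one_sub_norm_mem_Ioo_of_mem_eDisc hw).1
  rw [unitDisc, mem_ball_zero_iff] at hα ⊢
  nlinarith

/-- `Γ_{1/2}(ξ)` lies in the Stolz angle of opening `3` (`norm_sub_le_of_mem_coneRegion`), and the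
discs `Δ_η(α)` centred in it lie in the Stolz angle of this opening. -/
def stolzOpening (η : ℝ) : ℝ := (3 + η) / (1 - η)

/-- Any `β ∈ (1/2, 1)` with `stolzOpening η ^ 2 * (1 - β ^ 2) ≤ 1` would do. -/
def coneAperture (η : ℝ) : ℝ := 1 - 1 / (2 * stolzOpening η ^ 2)

lemma one_lt_stolzOpening {η : ℝ} (hη : η ∈ Ioo 0 1) : 1 < stolzOpening η := by
  rw [stolzOpening, one_lt_div (by linarith [hη.2])]
  linarith [hη.1]

lemma coneAperture_mem_Ioo {η : ℝ} (hη : η ∈ Ioo 0 1) : coneAperture η ∈ Ioo (1 / 2) 1 := by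
  have hK := one_lt_stolzOpening hη
  have hlt : 1 / (2 * stolzOpening η ^ 2) < 1 / 2 := by gcongr; nlinarith
  have hpos : 0 < 1 / (2 * stolzOpening η ^ 2) := by positivity
  rw [coneAperture]
  constructor <;> linarith

lemma sq_stolzOpening_mul_one_sub_sq_coneAperture_le {η : ℝ} (hη : η ∈ Ioo 0 1) :
    stolzOpening η ^ 2 * (1 - coneAperture η ^ 2) ≤ 1 := by
  have hK := one_lt_stolzOpening hη
  have h2 : 1 - coneAperture η ^ 2 ≤ 2 * (1 - coneAperture η) := by
    nlinarith [sq_nonneg (1 - coneAperture η)]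
  calc stolzOpening η ^ 2 * (1 - coneAperture η ^ 2)
      ≤ stolzOpening η ^ 2 * (2 * (1 - coneAperture η)) := by gcongr
    _ = 1 := by rw [coneAperture]; field_simp; ring

lemma eDisc_subset_coneRegion {η : ℝ} (hη : η ∈ Ioo 0 1) {ξ α : ℂ} (hξ : ‖ξ‖ = 1)
    (hα : α ∈ coneRegion (1 / 2) ξ) : eDisc η α ⊆ coneRegion (coneAperture η) ξ := by
  intro w hw
  have hβ := coneAperture_mem_Ioo hη
  have hK := one_lt_stolzOpening hη
  have hξα : ‖ξ - α‖ ≤ 3 * (1 - ‖α‖) := by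
    have := norm_sub_le_of_mem_coneRegion (by norm_num) hξ hα
    norm_num at this
    exact this
  have hwα : ‖w - α‖ < η * (1 - ‖α‖) := hw
  have hlow := (one_sub_norm_mem_Ioo_of_mem_eDisc hw).1
  refine mem_coneRegion_of_norm_sub_lt (by linarith) (by linarith [hβ.1])
    hβ.2.le (sq_stolzOpening_mul_one_sub_sq_coneAperture_le hη) hξ ?_
  calc ‖ξ - w‖ ≤ ‖ξ - α‖ + ‖w - α‖ := by
        rw [norm_sub_rev w α]; exact norm_sub_le_norm_sub_add_norm_sub ξ α w
    _ < (3 + η) * (1 - ‖α‖) := by linarith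
    _ = stolzOpening η * ((1 - η) * (1 - ‖α‖)) := by
        rw [stolzOpening]; field_simp [(by linarith [hη.2] : (1 - η) ≠ 0)]
    _ < stolzOpening η * (1 - ‖w‖) := by gcongr

instance : SFinite mA := by
  rw [mA]; infer_instance

lemma mA_ball (z : ℂ) (r : ℝ) : mA (Metric.ball z r) = ENNReal.ofReal r ^ 2 := by
  have hπ : (NNReal.pi : ℝ≥0∞) = ENNReal.ofReal π := by
    rw [← NNReal.coe_real_pi, ENNReal.ofReal_coe_nnreal]
  rw [mA, Measure.smul_apply, Complex.volume_ball, smul_eq_mul, hπ, mul_comm, mul_assoc,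
    ENNReal.mul_inv_cancel (by simp [Real.pi_pos]) ENNReal.ofReal_ne_top, mul_one]

lemma eDisc_eq_ball (η : ℝ) (α : ℂ) : eDisc η α = Metric.ball α (η * (1 - ‖α‖)) := by
  ext z; simp [eDisc, dist_eq]

lemma measurableSet_eDisc_graph (η : ℝ) : MeasurableSet {q : ℂ × ℂ | q.2 ∈ eDisc η q.1} :=
  (isOpen_lt (f := fun q : ℂ × ℂ => ‖q.2 - q.1‖) (by fun_prop) (by fun_prop)).measurableSet

lemma measurable_setLIntegral_eDisc (η : ℝ) {G : ℂ → ℝ≥0∞} (hG : Measurable G) :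
    Measurable fun α => ∫⁻ w in eDisc η α, G w ∂mA :=
  measurable_setLIntegral_prodMk_preimage (measurableSet_eDisc_graph η) hG

/-- The `α` with `w ∈ Δ_η(α)` lie in a disc of radius `≍ 1 - |w|` around `w` and have
`1 - |α| ≍ 1 - |w|`. -/
lemma setLIntegral_inv_one_sub_norm_pow_three_le {η : ℝ} (hη : η ∈ Ioo 0 1) {w : ℂ}
    (hw : ‖w‖ < 1) :
    ∫⁻ α in {α | w ∈ eDisc η α}, ENNReal.ofReal ((1 - ‖α‖) ^ 3)⁻¹ ∂mA ≤
      ENNReal.ofReal (η ^ 2 * (1 + η) ^ 3 / (1 - η) ^ 2) / ENNReal.ofReal (1 - ‖w‖) := by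
  obtain ⟨hη0, hη1⟩ := hη
  set A := 1 - ‖w‖
  have hA : 0 < A := by linarith
  have hsub : {α | w ∈ eDisc η α} ⊆ Metric.ball w (η / (1 - η) * A) := by
    intro α hα
    have h := (one_sub_norm_mem_Ioo_of_mem_eDisc hα).1
    have hwα : ‖w - α‖ < η * (1 - ‖α‖) := hα
    rw [Metric.mem_ball, dist_comm, dist_eq, div_mul_eq_mul_div, lt_div_iff₀ (by linarith)]
    nlinarith
  have hbound : ∀ α ∈ {α | w ∈ eDisc η α},
      ENNReal.ofReal ((1 - ‖α‖) ^ 3)⁻¹ ≤ ENNReal.ofReal (((1 + η) / A) ^ 3) := by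
    intro α hα
    have h := (one_sub_norm_mem_Ioo_of_mem_eDisc hα).2
    have hα0 : 0 < 1 - ‖α‖ := by nlinarith
    have hinv : (1 - ‖α‖)⁻¹ ≤ (1 + η) / A := by
      rw [inv_le_comm₀ hα0 (by positivity), inv_div, div_le_iff₀ (by linarith)]
      linarith
    gcongr
    rw [← inv_pow]
    gcongr
  calc ∫⁻ α in {α | w ∈ eDisc η α}, ENNReal.ofReal ((1 - ‖α‖) ^ 3)⁻¹ ∂mA
      ≤ ∫⁻ α in {α | w ∈ eDisc η α}, ENNReal.ofReal (((1 + η) / A) ^ 3) ∂mA :=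
        setLIntegral_mono measurable_const hbound
    _ = ENNReal.ofReal (((1 + η) / A) ^ 3) * mA {α | w ∈ eDisc η α} := setLIntegral_const _ _
    _ ≤ ENNReal.ofReal (((1 + η) / A) ^ 3) * mA (Metric.ball w (η / (1 - η) * A)) := by
        gcongr
    _ = ENNReal.ofReal (η ^ 2 * (1 + η) ^ 3 / (1 - η) ^ 2) / ENNReal.ofReal A := by
        rw [mA_ball, ← ENNReal.ofReal_pow (by positivity), ← ENNReal.ofReal_mul (by positivity),
          ← ENNReal.ofReal_div_of_pos hA]
        congr 1
        field_simp

lemma setLIntegral_indicator_coneRegion_le {η : ℝ} (hη : η ∈ Ioo 0 1) {ξ : ℂ} (hξ : ‖ξ‖ = 1)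
    (w : ℂ) :
    ∫⁻ α in {α | w ∈ eDisc η α},
        (coneRegion (1 / 2) ξ).indicator (fun α => ENNReal.ofReal ((1 - ‖α‖) ^ 3)⁻¹) α ∂mA ≤
      (coneRegion (coneAperture η) ξ).indicator (fun w =>
        ENNReal.ofReal (η ^ 2 * (1 + η) ^ 3 / (1 - η) ^ 2) / ENNReal.ofReal (1 - ‖w‖)) w := by
  by_cases hw : w ∈ coneRegion (coneAperture η) ξ
  · rw [indicator_of_mem hw]
    have hw1 : ‖w‖ < 1 := mem_ball_zero_iff.1 <|
      coneRegion_subset_unitDisc (coneAperture_mem_Ioo hη).2.le hξ hw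
    exact (lintegral_mono fun α => indicator_le_self _ _ α).trans
      (setLIntegral_inv_one_sub_norm_pow_three_le hη hw1)
  · rw [indicator_of_notMem hw]
    have hzero : ∀ α ∈ {α | w ∈ eDisc η α},
        (coneRegion (1 / 2) ξ).indicator (fun α => ENNReal.ofReal ((1 - ‖α‖) ^ 3)⁻¹) α ≤ 0 :=
      fun α hα => (indicator_of_notMem (fun hαΓ => hw (eDisc_subset_coneRegion hη hξ hαΓ hα)) _).le
    exact (setLIntegral_mono measurable_const hzero).trans (by simp)

lemma setLIntegral_coneRegion_mul_setLIntegral_eDisc_le {η : ℝ} (hη : η ∈ Ioo 0 1) {ξ : ℂ}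
    (hξ : ‖ξ‖ = 1) {G : ℂ → ℝ≥0∞} (hG : Measurable G) :
    ∫⁻ α in coneRegion (1 / 2) ξ,
        ENNReal.ofReal ((1 - ‖α‖) ^ 3)⁻¹ * ∫⁻ w in eDisc η α, G w ∂mA ∂mA ≤
      ENNReal.ofReal (η ^ 2 * (1 + η) ^ 3 / (1 - η) ^ 2) *
        ∫⁻ w in coneRegion (coneAperture η) ξ, G w / ENNReal.ofReal (1 - ‖w‖) ∂mA := by
  have hκ : Measurable fun α : ℂ => ENNReal.ofReal ((1 - ‖α‖) ^ 3)⁻¹ := by fun_prop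
  rw [← lintegral_const_mul' _ _ ENNReal.ofReal_ne_top,
    ← lintegral_indicator (isOpen_coneRegion _ _).measurableSet,
    ← lintegral_indicator (isOpen_coneRegion _ _).measurableSet]
  simp_rw [indicator_mul_left]
  calc _ = ∫⁻ w, (∫⁻ α in {α | w ∈ eDisc η α}, (coneRegion (1 / 2) ξ).indicator
          (fun α => ENNReal.ofReal ((1 - ‖α‖) ^ 3)⁻¹) α ∂mA) * G w ∂mA :=
        lintegral_mul_setLIntegral_prodMk_preimage (measurableSet_eDisc_graph η)
          (hκ.indicator (isOpen_coneRegion _ _).measurableSet) hG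
    _ ≤ _ := lintegral_mono fun w => by
        refine (mul_le_mul_left (setLIntegral_indicator_coneRegion_le hη hξ w) _).trans_eq ?_
        by_cases hw : w ∈ coneRegion (coneAperture η) ξ
        · simp only [indicator_of_mem hw, div_eq_mul_inv]; ring
        · simp only [indicator_of_notMem hw, zero_mul]

/-- The set `𝒜` of the statement, with `|f|^p` replaced by a general weight `G`. -/
def exceptionalSet (η ε : ℝ) (G : ℂ → ℝ≥0∞) : Set ℂ :=
  {α ∈ unitDisc | G α * mA (eDisc η α) < ENNReal.ofReal ε * ∫⁻ w in eDisc η α, G w ∂mA}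

lemma exceptionalSet_congr {η : ℝ} (hη : η ≤ 1) (ε : ℝ) {G G' : ℂ → ℝ≥0∞}
    (h : EqOn G G' unitDisc) : exceptionalSet η ε G = exceptionalSet η ε G' := by
  ext α
  refine and_congr_right fun hα => ?_
  rw [h hα, setLIntegral_congr_fun (eDisc_eq_ball η α ▸ Metric.isOpen_ball.measurableSet)
    fun w hw => h (eDisc_subset_unitDisc hη hα hw)]

lemma div_ofReal_le_of_mem_exceptionalSet {η ε : ℝ} (hη : 0 < η) {G : ℂ → ℝ≥0∞} {α : ℂ}
    (hα : α ∈ exceptionalSet η ε G) :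
    G α / ENNReal.ofReal (1 - ‖α‖) ≤ ENNReal.ofReal (ε / η ^ 2) *
      (ENNReal.ofReal ((1 - ‖α‖) ^ 3)⁻¹ * ∫⁻ w in eDisc η α, G w ∂mA) := by
  obtain ⟨hα1, h⟩ := hα
  set A := 1 - ‖α‖
  set I := ∫⁻ w in eDisc η α, G w ∂mA
  have hA : 0 < A := by rw [unitDisc, mem_ball_zero_iff] at hα1; linarith
  rw [eDisc_eq_ball, mA_ball, ← ENNReal.ofReal_pow (by positivity)] at h
  have hG : G α ≤ ENNReal.ofReal ε * I / ENNReal.ofReal ((η * A) ^ 2) :=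
    (ENNReal.le_div_iff_mul_le (Or.inl (ENNReal.ofReal_pos.2 (by positivity)).ne')
      (Or.inl ENNReal.ofReal_ne_top)).2 h.le
  have hconst : ENNReal.ofReal (ε / η ^ 2) * ENNReal.ofReal (A ^ 3)⁻¹ =
      ENNReal.ofReal ε * ENNReal.ofReal ((η * A) ^ 2)⁻¹ * ENNReal.ofReal A⁻¹ := by
    rw [← ENNReal.ofReal_mul' (by positivity), ← ENNReal.ofReal_mul' (by positivity),
      ← ENNReal.ofReal_mul' (by positivity)]
    congr 1
    field_simp
  calc G α / ENNReal.ofReal A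
      ≤ ENNReal.ofReal ε * I / ENNReal.ofReal ((η * A) ^ 2) / ENNReal.ofReal A := by gcongr
    _ = ENNReal.ofReal ε * ENNReal.ofReal ((η * A) ^ 2)⁻¹ * ENNReal.ofReal A⁻¹ * I := by
        rw [div_eq_mul_inv, div_eq_mul_inv, ← ENNReal.ofReal_inv_of_pos (by positivity),
          ← ENNReal.ofReal_inv_of_pos hA]
        ring
    _ = ENNReal.ofReal (ε / η ^ 2) * (ENNReal.ofReal (A ^ 3)⁻¹ * I) := by
        rw [← mul_assoc, hconst]

lemma setLIntegral_exceptionalSet_inter_coneRegion_le {η : ℝ} (hη : η ∈ Ioo 0 1) {ξ : ℂ}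
    (hξ : ‖ξ‖ = 1) {G : ℂ → ℝ≥0∞} (hG : Measurable G) (ε : ℝ) :
    ∫⁻ z in exceptionalSet η ε G ∩ coneRegion (1 / 2) ξ, G z / ENNReal.ofReal (1 - ‖z‖) ∂mA ≤
      ENNReal.ofReal (ε * ((1 + η) ^ 3 / (1 - η) ^ 2)) *
        ∫⁻ z in coneRegion (coneAperture η) ξ, G z / ENNReal.ofReal (1 - ‖z‖) ∂mA := by
  have hJ := measurable_setLIntegral_eDisc η hG
  calc _ ≤ ∫⁻ α in coneRegion (1 / 2) ξ, ENNReal.ofReal (ε / η ^ 2) *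
          (ENNReal.ofReal ((1 - ‖α‖) ^ 3)⁻¹ * ∫⁻ w in eDisc η α, G w ∂mA) ∂mA :=
        (setLIntegral_mono (by fun_prop) fun α hα =>
          div_ofReal_le_of_mem_exceptionalSet hη.1 hα.1).trans
          (lintegral_mono_set inter_subset_right)
    _ = ENNReal.ofReal (ε / η ^ 2) * ∫⁻ α in coneRegion (1 / 2) ξ,
          ENNReal.ofReal ((1 - ‖α‖) ^ 3)⁻¹ * ∫⁻ w in eDisc η α, G w ∂mA ∂mA :=
        lintegral_const_mul _ (by fun_prop)
    _ ≤ ENNReal.ofReal (ε / η ^ 2) * (ENNReal.ofReal (η ^ 2 * (1 + η) ^ 3 / (1 - η) ^ 2) *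
          ∫⁻ z in coneRegion (coneAperture η) ξ, G z / ENNReal.ofReal (1 - ‖z‖) ∂mA) :=
        mul_le_mul_right (setLIntegral_coneRegion_mul_setLIntegral_eDisc_le hη hξ hG) _
    _ = _ := by
        have hC : 0 ≤ η ^ 2 * (1 + η) ^ 3 / (1 - η) ^ 2 := by
          have := hη.1; positivity
        rw [← mul_assoc, ← ENNReal.ofReal_mul' hC]
        congr 2
        field_simp [hη.1.ne']

theorem lemma_A_estimate_general (p : ℝ) (η : ℝ) (hη : η ∈ Set.Ioo (0:ℝ) 1) :
    ∃ C₁ > (0:ℝ), ∃ β ∈ Set.Ioo (1/2 : ℝ) 1, ∀ ε > (0:ℝ), ∀ f : ℂ → ℂ,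
      DifferentiableOn ℂ f unitDisc → ∀ ξ : ℂ, ‖ξ‖ = 1 →
        (∫⁻ z in {α ∈ unitDisc |
              ENNReal.ofReal (‖f α‖ ^ p) * mA (eDisc η α) <
                ENNReal.ofReal ε *
                  ∫⁻ w in eDisc η α, ENNReal.ofReal (‖f w‖ ^ p) ∂mA} ∩
            coneRegion (1/2) ξ,
            ENNReal.ofReal (‖f z‖ ^ p / (1 - ‖z‖)) ∂mA) ≤
          ENNReal.ofReal (ε * C₁) *
            ∫⁻ z in coneRegion β ξ,
              ENNReal.ofReal (‖f z‖ ^ p / (1 - ‖z‖)) ∂mA := by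
  refine ⟨(1 + η) ^ 3 / (1 - η) ^ 2,
    div_pos (pow_pos (by linarith [hη.1]) 3) (pow_pos (by linarith [hη.2]) 2), coneAperture η, coneAperture_mem_Ioo hη, fun ε _ f hf ξ hξ => ?_⟩
  set F : ℂ → ℝ≥0∞ := fun w => ENNReal.ofReal (‖f w‖ ^ p)
  have hG : Measurable (unitDisc.indicator F) :=
    hf.continuousOn.measurable_indicator_comp Metric.isOpen_ball.measurableSet
      (h := fun z => ENNReal.ofReal (‖z‖ ^ p)) (by fun_prop)
  have hFG : EqOn F (unitDisc.indicator F) unitDisc := fun w hw => (indicator_of_mem hw F).symm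
  have hdiv : ∀ z ∈ unitDisc, ENNReal.ofReal (‖f z‖ ^ p / (1 - ‖z‖)) =
      unitDisc.indicator F z / ENNReal.ofReal (1 - ‖z‖) := fun z hz => by
    rw [← hFG hz, ENNReal.ofReal_div_of_pos (by rw [unitDisc, mem_ball_zero_iff] at hz; linarith)]
  calc _ ≤ ∫⁻ z in exceptionalSet η ε (unitDisc.indicator F) ∩ coneRegion (1 / 2) ξ,
          unitDisc.indicator F z / ENNReal.ofReal (1 - ‖z‖) ∂mA := by
        rw [← exceptionalSet_congr hη.2.le ε hFG]
        exact setLIntegral_mono (by fun_prop) fun z hz => (hdiv z hz.1.1).le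
    _ ≤ _ := setLIntegral_exceptionalSet_inter_coneRegion_le hη hξ hG ε
    _ = _ := by
        congr 1
        refine (setLIntegral_congr_fun (isOpen_coneRegion _ _).measurableSet fun z hz => ?_).symm
        exact hdiv z (coneRegion_subset_unitDisc (coneAperture_mem_Ioo hη).2.le hξ hz)

/-- Lemma on the exceptional set `𝒜`: there are `C₁ = C₁(η) > 0` and
`β ∈ (1/2,1)` such that for every `ε > 0`, holomorphic `f` and `ξ ∈ 𝕋`,
`∫_{𝒜 ∩ Γ_{1/2}(ξ)} |f|^p dm/(1-|z|) ≤ ε C₁ ∫_{Γ_β(ξ)} |f|^p dm/(1-|z|)`. -/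
theorem lemma_A_estimate (p : ℝ) (hp : 1 ≤ p) (η : ℝ) (hη : η ∈ Set.Ioo (0:ℝ) 1) :
    ∃ C₁ > (0:ℝ), ∃ β ∈ Set.Ioo (1/2 : ℝ) 1, ∀ ε > (0:ℝ), ∀ f : ℂ → ℂ,
      DifferentiableOn ℂ f unitDisc → ∀ ξ : ℂ, ‖ξ‖ = 1 →
        (∫⁻ z in {α ∈ unitDisc |
              ENNReal.ofReal (‖f α‖ ^ p) * mA (eDisc η α) <
                ENNReal.ofReal ε *
                  ∫⁻ w in eDisc η α, ENNReal.ofReal (‖f w‖ ^ p) ∂mA} ∩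
            coneRegion (1/2) ξ,
            ENNReal.ofReal (‖f z‖ ^ p / (1 - ‖z‖)) ∂mA) ≤
          ENNReal.ofReal (ε * C₁) *
            ∫⁻ z in coneRegion β ξ,
              ENNReal.ofReal (‖f z‖ ^ p / (1 - ‖z‖)) ∂mA :=
  lemma_A_estimate_general p η hη
end
end

section
/- Let 1 ≤ p, q < ∞, let λ > max{1, p/q} and γ > (λ+2)/p be fixed, and for α ∈ 𝔻 let f_α(z) = (1−|α|²)^{γ − 1/p − 1/q} / (1 − ᾱz)^γ. Then for every η ∈ (0,1) there is a constant C > 0, independent of α and of the measurable set G ⊆ 𝔻, such that for every measurable G ⊆ 𝔻 and every α ∈ 𝔻, ‖f_α · χ_{G ∩ Δ(α,η)}‖_{T_p^q} ≤ C (m(G ∩ Δ(α,η)) / m(Δ(α,η)))^{1/p}. -/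
open MeasureTheory Complex Set
open scoped Real ENNReal

noncomputable section

/-! On `Δ(α, η)` the quantities `1 - |z|`, `|1 - ᾱz|` and `1 - |α|²` are all comparable to
`d = 1 - |α|` (via `|1 - ᾱz|² - |α - z|² = (1 - |α|²)(1 - |z|²)`), so `|f_α|^p / (1 - |z|)` is at
most a constant times `d^(-2 - p/q)` there, whatever the sign of the exponents. A cone
`Γ_{1/2}(ξ)` meets `Δ(α, η)` only when `|ξ - α| ≲ d`, i.e. for `ξ` in an arc of length `≲ d`.
Hence `‖f_α χ_E‖_{T_p^q} ≲ (d^(-2 - p/q) m(E))^(1/p) d^(1/q) = (m(E) / d²)^(1/p)`, and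
`m(Δ(α, η)) ≲ d²`. -/

open ComplexConjugate

lemma rpow_le_rpow_abs_mul_rpow {a c x : ℝ} (ha : 0 < a) (hc : 1 ≤ c) (hax : a ≤ x)
    (hxc : x ≤ c * a) (t : ℝ) : x ^ t ≤ c ^ |t| * a ^ t := by
  rcases le_or_gt 0 t with ht | ht
  · rw [abs_of_nonneg ht, ← Real.mul_rpow (by linarith) ha.le]
    exact Real.rpow_le_rpow (ha.le.trans hax) hxc ht
  · calc x ^ t ≤ a ^ t := Real.rpow_le_rpow_of_nonpos ha hax ht.le
      _ ≤ c ^ |t| * a ^ t :=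
        le_mul_of_one_le_left (Real.rpow_nonneg ha.le _) (Real.one_le_rpow hc (abs_nonneg t))

lemma ofReal_rpow_mul_ofReal_rpow_eq {A B D d p q : ℝ} (hA : 0 ≤ A) (hB : 0 ≤ B) (hD : 0 < D)
    (hd : 0 < d) (hp : 0 < p) (hq : 0 < q) (m : ℝ≥0∞) :
    (ENNReal.ofReal (A * d ^ (-(2 + p / q))) * m) ^ (1 / p) * ENNReal.ofReal (B * d) ^ (1 / q) =
      ENNReal.ofReal ((A * D) ^ (1 / p) * B ^ (1 / q)) *
        (m / ENNReal.ofReal (D * d ^ 2)) ^ (1 / p) := by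
  have hX : 0 < (D * d ^ 2) ^ (1 / p) := by positivity
  have hexp : d ^ (-(2 + p / q) * (1 / p)) * d ^ (1 / q) * d ^ ((2 : ℕ) * (1 / p)) = 1 := by
    rw [← Real.rpow_add hd, ← Real.rpow_add hd, ← Real.rpow_zero d]
    congr 1
    push_cast
    field_simp
    ring
  have hreal : (A * d ^ (-(2 + p / q))) ^ (1 / p) * (B * d) ^ (1 / q) =
      (A * D) ^ (1 / p) * B ^ (1 / q) / (D * d ^ 2) ^ (1 / p) := by
    rw [eq_div_iff hX.ne', Real.mul_rpow hA (by positivity), Real.mul_rpow hB hd.le,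
      Real.mul_rpow hA hD.le, Real.mul_rpow hD.le (by positivity), ← Real.rpow_natCast d 2,
      ← Real.rpow_mul hd.le, ← Real.rpow_mul hd.le]
    linear_combination (A ^ (1 / p) * B ^ (1 / q) * D ^ (1 / p)) * hexp
  rw [ENNReal.mul_rpow_of_nonneg _ _ (by positivity),
    ENNReal.div_rpow_of_nonneg _ _ (by positivity),
    ENNReal.ofReal_rpow_of_nonneg (by positivity) (by positivity),
    ENNReal.ofReal_rpow_of_nonneg (by positivity) (by positivity),
    ENNReal.ofReal_rpow_of_nonneg (by positivity) (by positivity),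
    mul_right_comm, ← ENNReal.ofReal_mul (by positivity), hreal, ENNReal.ofReal_div_of_pos hX,
    div_eq_mul_inv, ENNReal.div_eq_inv_mul]
  ring

lemma norm_one_sub_conj_mul_sq_sub_norm_sub_sq (α z : ℂ) :
    ‖1 - conj α * z‖ ^ 2 - ‖α - z‖ ^ 2 = (1 - ‖α‖ ^ 2) * (1 - ‖z‖ ^ 2) := by
  simp only [Complex.sq_norm, Complex.normSq_apply, sub_re, sub_im, mul_re, mul_im, one_re,
    one_im, conj_re, conj_im]
  ring

lemma one_sub_norm_le_norm_one_sub_conj_mul (α : ℂ) {z : ℂ} (hz : ‖z‖ ≤ 1) :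
    1 - ‖α‖ ≤ ‖1 - conj α * z‖ := by
  have h : ‖conj α * z‖ ≤ ‖α‖ := by
    rw [norm_mul, Complex.norm_conj]
    exact mul_le_of_le_one_right (norm_nonneg α) hz
  have := norm_sub_norm_le (1 : ℂ) (conj α * z)
  rw [norm_one] at this
  linarith

lemma norm_one_sub_conj_mul_le {α : ℂ} (hα : ‖α‖ ≤ 1) (z : ℂ) :
    ‖1 - conj α * z‖ ≤ (1 - ‖α‖ ^ 2) + ‖α - z‖ := by
  have h : 1 - conj α * z = ((1 - ‖α‖ ^ 2 : ℝ) : ℂ) + conj α * (α - z) := by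
    push_cast
    linear_combination -Complex.conj_mul' α
  have h1 : ‖conj α * (α - z)‖ ≤ ‖α - z‖ := by
    rw [norm_mul, Complex.norm_conj]
    exact mul_le_of_le_one_left (norm_nonneg _) hα
  have h2 : ‖((1 - ‖α‖ ^ 2 : ℝ) : ℂ)‖ = 1 - ‖α‖ ^ 2 := by
    rw [Complex.norm_real, Real.norm_of_nonneg (by nlinarith [norm_nonneg α])]
  rw [h]
  exact (norm_add_le _ _).trans (by linarith)

section pDisc

variable {α z : ℂ} {η : ℝ}

lemma norm_lt_one_of_mem_pDisc (hz : z ∈ pDisc α η) : ‖z‖ < 1 := by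
  simpa [unitDisc] using hz.1

lemma norm_sub_lt_of_mem_pDisc (hα : ‖α‖ < 1) (hz : z ∈ pDisc α η) :
    ‖α - z‖ < η * ‖1 - conj α * z‖ := by
  have hw : 0 < ‖1 - conj α * z‖ :=
    (sub_pos.2 hα).trans_le
      (one_sub_norm_le_norm_one_sub_conj_mul α (norm_lt_one_of_mem_pDisc hz).le)
  rw [← div_lt_iff₀ hw, ← norm_div]
  exact hz.2

variable (hα : ‖α‖ < 1) (hz : z ∈ pDisc α η)
include hα hz

lemma pos_of_mem_pDisc : 0 < η :=
  pos_of_mul_pos_left ((norm_nonneg _).trans_lt (norm_sub_lt_of_mem_pDisc hα hz)) (norm_nonneg _)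

lemma norm_one_sub_conj_mul_le_of_mem_pDisc :
    (1 - η) * ‖1 - conj α * z‖ ≤ 2 * (1 - ‖α‖) := by
  have h1 := norm_sub_lt_of_mem_pDisc hα hz
  have h2 := norm_one_sub_conj_mul_le hα.le z
  nlinarith [norm_nonneg α]

lemma norm_sub_le_of_mem_pDisc (hη : η < 1) : (1 - η) * ‖α - z‖ ≤ 2 * (1 - ‖α‖) := by
  have h1 := norm_sub_lt_of_mem_pDisc hα hz
  have h2 := norm_one_sub_conj_mul_le_of_mem_pDisc hα hz
  have h3 : ‖α - z‖ ≤ ‖1 - conj α * z‖ := by nlinarith [norm_nonneg (1 - conj α * z)]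
  nlinarith

lemma one_sub_norm_le_of_mem_pDisc (hη : η < 1) :
    (1 - η ^ 2) * (1 - ‖α‖) ≤ 4 * (1 - ‖z‖) := by
  have hz1 := norm_lt_one_of_mem_pDisc hz
  have hη0 := pos_of_mem_pDisc hα hz
  have hw : (1 - ‖α‖) ^ 2 ≤ ‖1 - conj α * z‖ ^ 2 :=
    pow_le_pow_left₀ (by linarith) (one_sub_norm_le_norm_one_sub_conj_mul α hz1.le) 2
  have hαz : ‖α - z‖ ^ 2 ≤ η ^ 2 * ‖1 - conj α * z‖ ^ 2 := by
    rw [← mul_pow]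
    exact pow_le_pow_left₀ (norm_nonneg _) (norm_sub_lt_of_mem_pDisc hα hz).le 2
  have hid := norm_one_sub_conj_mul_sq_sub_norm_sub_sq α z
  have hα2 : 1 - ‖α‖ ^ 2 ≤ 2 * (1 - ‖α‖) := by nlinarith
  have hz2 : 1 - ‖z‖ ^ 2 ≤ 2 * (1 - ‖z‖) := by nlinarith
  have hprod := mul_le_mul hα2 hz2 (by nlinarith [norm_nonneg z]) (by linarith)
  have key : (1 - η ^ 2) * (1 - ‖α‖) ^ 2 ≤ 4 * (1 - ‖α‖) * (1 - ‖z‖) := by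
    nlinarith [mul_le_mul_of_nonneg_left hw (by nlinarith : 0 ≤ 1 - η ^ 2)]
  nlinarith

lemma norm_testFun_le_of_mem_pDisc (p q γ : ℝ) (hη : η < 1) :
    ‖testFun p q γ α z‖ ≤
      2 ^ |γ - 1 / p - 1 / q| * (2 / (1 - η)) ^ |γ| * (1 - ‖α‖) ^ (-(1 / p + 1 / q)) := by
  set d := 1 - ‖α‖
  have hd : 0 < d := sub_pos.2 hα
  have hη' : 0 < 1 - η := sub_pos.2 hη
  have h1 : 0 < 1 - ‖α‖ ^ 2 := by nlinarith [norm_nonneg α]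
  have hnum := rpow_le_rpow_abs_mul_rpow hd one_le_two (by nlinarith [norm_nonneg α])
    (by nlinarith [norm_nonneg α] : 1 - ‖α‖ ^ 2 ≤ 2 * d) (γ - 1 / p - 1 / q)
  have hden := rpow_le_rpow_abs_mul_rpow hd
    ((one_le_div hη').2 (by linarith [pos_of_mem_pDisc hα hz] : 1 - η ≤ 2))
    (one_sub_norm_le_norm_one_sub_conj_mul α (norm_lt_one_of_mem_pDisc hz).le)
    (by rw [div_mul_eq_mul_div, le_div_iff₀ hη', mul_comm]
        exact norm_one_sub_conj_mul_le_of_mem_pDisc hα hz) (-γ)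
  rw [abs_neg] at hden
  have hnorm : ‖testFun p q γ α z‖ =
      (1 - ‖α‖ ^ 2) ^ (γ - 1 / p - 1 / q) * ‖1 - conj α * z‖ ^ (-γ) := by
    rw [testFun, norm_div, Complex.norm_real, Real.norm_of_nonneg (Real.rpow_nonneg h1.le _),
      Complex.norm_cpow_real, Real.rpow_neg (norm_nonneg _), div_eq_mul_inv]
  calc ‖testFun p q γ α z‖
      ≤ (2 ^ |γ - 1 / p - 1 / q| * d ^ (γ - 1 / p - 1 / q)) *
          ((2 / (1 - η)) ^ |γ| * d ^ (-γ)) := by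
        rw [hnorm]
        exact mul_le_mul hnum hden (by positivity) (by positivity)
    _ = 2 ^ |γ - 1 / p - 1 / q| * (2 / (1 - η)) ^ |γ| * d ^ (-(1 / p + 1 / q)) := by
        rw [show -(1 / p + 1 / q) = (γ - 1 / p - 1 / q) + -γ by ring, Real.rpow_add hd]
        ring

lemma norm_testFun_rpow_div_le_of_mem_pDisc {p : ℝ} (hp : 0 < p) (q γ : ℝ) (hη : η < 1) :
    ‖testFun p q γ α z‖ ^ p / (1 - ‖z‖) ≤
      (2 ^ |γ - 1 / p - 1 / q| * (2 / (1 - η)) ^ |γ|) ^ p * (4 / (1 - η ^ 2)) *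
        (1 - ‖α‖) ^ (-(2 + p / q)) := by
  set K := 2 ^ |γ - 1 / p - 1 / q| * (2 / (1 - η)) ^ |γ|
  set d := 1 - ‖α‖
  have hd : 0 < d := sub_pos.2 hα
  have hη0 := pos_of_mem_pDisc hα hz
  have hη2 : 0 < 1 - η ^ 2 := by nlinarith
  have hK : 0 ≤ K := by positivity
  have hpow : ‖testFun p q γ α z‖ ^ p ≤ K ^ p * d ^ (-(1 + p / q)) := by
    calc ‖testFun p q γ α z‖ ^ p ≤ (K * d ^ (-(1 / p + 1 / q))) ^ p :=
          Real.rpow_le_rpow (norm_nonneg _) (norm_testFun_le_of_mem_pDisc hα hz p q γ hη) hp.le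
      _ = K ^ p * d ^ (-(1 + p / q)) := by
          rw [Real.mul_rpow hK (by positivity), ← Real.rpow_mul hd.le]
          congr 2
          field_simp
  have hlow : (1 - η ^ 2) / 4 * d ≤ 1 - ‖z‖ := by
    linarith [one_sub_norm_le_of_mem_pDisc hα hz hη]
  calc ‖testFun p q γ α z‖ ^ p / (1 - ‖z‖)
      ≤ K ^ p * d ^ (-(1 + p / q)) / ((1 - η ^ 2) / 4 * d) :=
        div_le_div₀ (by positivity) hpow (by positivity) hlow
    _ = K ^ p * (4 / (1 - η ^ 2)) * d ^ (-(2 + p / q)) := by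
        rw [show -(2 + p / q) = -(1 + p / q) - 1 by ring, Real.rpow_sub hd, Real.rpow_one]
        field_simp

end pDisc

lemma measurableSet_pDisc (α : ℂ) (η : ℝ) : MeasurableSet (pDisc α η) :=
  measurableSet_ball.inter
    (measurableSet_lt (f := fun z => ‖(α - z) / (1 - conj α * z)‖) (by fun_prop)
      measurable_const)

lemma mA_closedBall (a : ℂ) (r : ℝ) : mA (Metric.closedBall a r) = ENNReal.ofReal r ^ 2 := by
  rw [mA, Measure.smul_apply, Complex.volume_closedBall, smul_eq_mul, mul_comm, mul_assoc,
    ← ENNReal.ofReal_coe_nnreal, NNReal.coe_real_pi,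
    ENNReal.mul_inv_cancel (by simp [Real.pi_pos]) ENNReal.ofReal_ne_top, mul_one]

lemma mA_pDisc_le {α : ℂ} {η : ℝ} (hα : ‖α‖ < 1) (hη : η < 1) :
    mA (pDisc α η) ≤ ENNReal.ofReal ((2 / (1 - η)) ^ 2 * (1 - ‖α‖) ^ 2) := by
  have hη' : 0 < 1 - η := sub_pos.2 hη
  have hd : 0 < 1 - ‖α‖ := sub_pos.2 hα
  have hsub : pDisc α η ⊆ Metric.closedBall α (2 / (1 - η) * (1 - ‖α‖)) := by
    intro z hz
    rw [Metric.mem_closedBall, dist_comm, dist_eq_norm, div_mul_eq_mul_div, le_div_iff₀ hη',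
      mul_comm]
    exact norm_sub_le_of_mem_pDisc hα hz hη
  calc mA (pDisc α η) ≤ mA (Metric.closedBall α (2 / (1 - η) * (1 - ‖α‖))) := measure_mono hsub
    _ = _ := by rw [mA_closedBall, ← ENNReal.ofReal_pow (by positivity), mul_pow]

lemma abs_sub_le_mul_norm_exp_sub_exp {θ φ : ℝ} (h : |θ - φ| ≤ π) :
    |θ - φ| ≤ π / 2 * ‖exp (θ * I) - exp (φ * I)‖ := by
  have hchord : ‖exp (θ * I) - exp (φ * I)‖ = 2 * |Real.sin ((θ - φ) / 2)| := by
    have : exp (θ * I) - exp (φ * I) = exp (φ * I) * (exp (I * ↑(θ - φ)) - 1) := by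
      rw [mul_sub, ← Complex.exp_add]; push_cast; ring_nf
    rw [this, norm_mul, Complex.norm_exp_ofReal_mul_I, one_mul,
      Complex.norm_exp_I_mul_ofReal_sub_one, norm_mul, Real.norm_eq_abs]
    norm_num
  have hjordan := Real.mul_abs_le_abs_sin (x := (θ - φ) / 2)
    (by rw [abs_div, abs_two]; linarith)
  rw [hchord, abs_div, abs_two] at *
  have := Real.pi_pos
  field_simp at hjordan ⊢
  linarith

lemma volume_setOf_norm_exp_mul_I_sub_le (ζ : ℂ) {r : ℝ} (hr : 0 ≤ r) :
    volume {θ ∈ Ioo 0 (2 * π) | ‖exp (θ * I) - ζ‖ ≤ r} ≤ ENNReal.ofReal (4 * π * r) := by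
  set φ := arg ζ
  have hζ : ‖ζ - exp (φ * I)‖ = |‖ζ‖ - 1| := by
    conv_lhs => rw [← Complex.norm_mul_exp_arg_mul_I ζ]
    rw [← sub_one_mul, norm_mul, Complex.norm_exp_ofReal_mul_I, mul_one, ← Complex.ofReal_one,
      ← Complex.ofReal_sub, Complex.norm_real, Real.norm_eq_abs]
  have hsub : {θ ∈ Ioo 0 (2 * π) | ‖exp (θ * I) - ζ‖ ≤ r} ⊆
      Metric.closedBall φ (π * r) ∪ Metric.closedBall (φ + 2 * π) (π * r) := by
    rintro θ ⟨⟨hθ0, hθ2π⟩, hθ⟩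
    have hφ := Complex.neg_pi_lt_arg ζ
    have hφ' := Complex.arg_le_pi ζ
    have hchord : ‖exp (θ * I) - exp (φ * I)‖ ≤ 2 * r := by
      have h1 := norm_sub_le_norm_sub_add_norm_sub (exp (θ * I)) ζ (exp (φ * I))
      have h2 := abs_norm_sub_norm_le ζ (exp (θ * I))
      rw [Complex.norm_exp_ofReal_mul_I, ← hζ, norm_sub_rev ζ (exp (θ * I))] at h2
      linarith
    simp only [mem_union, Metric.mem_closedBall, Real.dist_eq]
    rcases le_or_gt (θ - φ) π with h | h
    · left
      have := abs_sub_le_mul_norm_exp_sub_exp (abs_le.2 ⟨by linarith, h⟩)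
      nlinarith [Real.pi_pos]
    · right
      have hper : exp (((φ + 2 * π : ℝ) : ℂ) * I) = exp (φ * I) := by
        have : ((φ + 2 * π : ℝ) : ℂ) * I = φ * I + 2 * π * I := by push_cast; ring
        rw [this, Complex.exp_periodic]
      have := abs_sub_le_mul_norm_exp_sub_exp (θ := θ) (φ := φ + 2 * π)
        (abs_le.2 ⟨by linarith, by linarith⟩)
      rw [hper] at this
      nlinarith [Real.pi_pos]
  calc _ ≤ volume (Metric.closedBall φ (π * r) ∪ Metric.closedBall (φ + 2 * π) (π * r)) :=
        measure_mono hsub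
    _ ≤ ENNReal.ofReal (2 * (π * r)) + ENNReal.ofReal (2 * (π * r)) := by
        refine (measure_union_le _ _).trans_eq ?_
        rw [Real.volume_closedBall, Real.volume_closedBall]
    _ = ENNReal.ofReal (4 * π * r) := by
        rw [← ENNReal.ofReal_add (by positivity) (by positivity)]
        ring_nf

lemma norm_sub_le_of_mem_coneRegion_s11 {β : ℝ} (hβ : β < 1) {ξ w : ℂ} (hξ : ‖ξ‖ = 1)
    (hw : w ∈ coneRegion β ξ) : (1 - β) * ‖w - ξ‖ ≤ (1 + β) * (1 - ‖w‖) := by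
  rcases hw with hw | hw
  · have hw : ‖w‖ < β := hw
    have := norm_sub_le w ξ
    nlinarith [norm_nonneg w]
  · obtain ⟨z, hz, t, ht0, ht1, rfl⟩ := mem_iUnion₂.1 hw
    have hz : ‖z‖ < β := hz
    have hsub : (1 - (t : ℂ)) * z + t * ξ - ξ = ((1 - t : ℝ) : ℂ) * (z - ξ) := by
      push_cast; ring
    have hnorm : ‖(1 - (t : ℂ)) * z + t * ξ‖ ≤ (1 - t) * ‖z‖ + t := by
      have := norm_add_le (((1 - t : ℝ) : ℂ) * z) ((t : ℂ) * ξ)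
      rw [norm_mul, norm_mul, Complex.norm_real, Complex.norm_real, hξ,
        Real.norm_of_nonneg (by linarith), Real.norm_of_nonneg ht0] at this
      push_cast at this
      linarith
    rw [hsub, norm_mul, Complex.norm_real, Real.norm_of_nonneg (by linarith)]
    have hzξ := norm_sub_le z ξ
    rw [hξ] at hzξ
    nlinarith [norm_nonneg z, mul_le_mul_of_nonneg_left hzξ (by linarith : 0 ≤ 1 - t)]

lemma norm_sub_le_of_mem_coneRegion_of_mem_pDisc {α ξ w : ℂ} {η : ℝ} (hα : ‖α‖ < 1)
    (hη : η < 1) (hξ : ‖ξ‖ = 1) (hwΓ : w ∈ coneRegion (1 / 2) ξ) (hwΔ : w ∈ pDisc α η) :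
    (1 - η) * ‖ξ - α‖ ≤ 11 * (1 - ‖α‖) := by
  have hcone := norm_sub_le_of_mem_coneRegion_s11 (by norm_num) hξ hwΓ
  have hαw := norm_sub_le_of_mem_pDisc hα hwΔ hη
  have htri := norm_sub_le_norm_sub_add_norm_sub ξ w α
  have hnorm := norm_sub_norm_le α w
  rw [norm_sub_rev ξ w, norm_sub_rev w α] at htri
  have hη0 := pos_of_mem_pDisc hα hwΔ
  have hwξ : (1 - η) * ‖w - ξ‖ ≤ 3 * (1 - η) * (1 - ‖w‖) := by nlinarith
  nlinarith

lemma volume_setOf_pDisc_inter_coneRegion_nonempty_le {α : ℂ} {η : ℝ} (hα : ‖α‖ < 1)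
    (hη : η < 1) :
    volume {θ ∈ Ioo 0 (2 * π) | (pDisc α η ∩ coneRegion (1 / 2) (exp (θ * I))).Nonempty} ≤
      ENNReal.ofReal (44 * π / (1 - η) * (1 - ‖α‖)) := by
  have hη' : 0 < 1 - η := sub_pos.2 hη
  have hd : 0 < 1 - ‖α‖ := sub_pos.2 hα
  calc _ ≤ volume {θ ∈ Ioo 0 (2 * π) | ‖exp (θ * I) - α‖ ≤ 11 * (1 - ‖α‖) / (1 - η)} := by
        refine measure_mono fun θ ⟨hθ, w, hwΔ, hwΓ⟩ => ⟨hθ, ?_⟩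
        rw [le_div_iff₀ hη', mul_comm]
        exact norm_sub_le_of_mem_coneRegion_of_mem_pDisc hα hη (norm_exp_ofReal_mul_I θ) hwΓ hwΔ
    _ ≤ _ := (volume_setOf_norm_exp_mul_I_sub_le α (by positivity)).trans_eq (by congr 1; ring)

lemma tentNormOn_indicator_le {p q β : ℝ} (hp : 0 < p) (hq : 0 < q) {G E : Set ℂ}
    (hE : MeasurableSet E) {f : ℂ → ℂ} {M : ℝ} (hM : ∀ z ∈ E, ‖f z‖ ^ p / (1 - ‖z‖) ≤ M)
    {T : Set ℝ}
    (hT : ∀ θ ∈ Ioo 0 (2 * π), (E ∩ (coneRegion β (exp (θ * I)) ∩ G)).Nonempty → θ ∈ T) :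
    tentNormOn p q β G (E.indicator f) ≤
      (ENNReal.ofReal M * mA E) ^ (1 / p) * volume T ^ (1 / q) := by
  set c := ENNReal.ofReal M * mA E
  have hinner : ∀ S : Set ℂ,
      ∫⁻ z in S, ENNReal.ofReal (‖E.indicator f z‖ ^ p / (1 - ‖z‖)) ∂mA ≤
        ENNReal.ofReal M * mA (E ∩ S) := by
    intro S
    calc _ ≤ ∫⁻ z in S, E.indicator (fun _ => ENNReal.ofReal M) z ∂mA := by
          refine lintegral_mono fun z => ?_
          by_cases hz : z ∈ E
          · simp only [indicator_of_mem hz]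
            exact ENNReal.ofReal_le_ofReal (hM z hz)
          · simp [indicator_of_notMem hz, Real.zero_rpow hp.ne']
      _ = _ := by rw [lintegral_indicator hE, setLIntegral_const, Measure.restrict_apply hE]
  have houter : ∀ θ ∈ Ioo 0 (2 * π),
      (∫⁻ z in coneRegion β (exp (θ * I)) ∩ G,
          ENNReal.ofReal (‖E.indicator f z‖ ^ p / (1 - ‖z‖)) ∂mA) ^ (q / p) ≤
        T.indicator (fun _ => c ^ (q / p)) θ := by
    intro θ hθ
    by_cases hθT : θ ∈ T
    · rw [indicator_of_mem hθT]
      exact ENNReal.rpow_le_rpow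
        ((hinner _).trans (mul_le_mul_right (measure_mono inter_subset_left) _))
        (div_pos hq hp).le
    · have hempty : E ∩ (coneRegion β (exp (θ * I)) ∩ G) = ∅ :=
        not_nonempty_iff_eq_empty.1 (mt (hT θ hθ) hθT)
      have hzero := hinner (coneRegion β (exp (θ * I)) ∩ G)
      rw [hempty, measure_empty, mul_zero, nonpos_iff_eq_zero] at hzero
      rw [hzero, ENNReal.zero_rpow_of_pos (div_pos hq hp)]
      exact zero_le
  calc tentNormOn p q β G (E.indicator f)
      ≤ (∫⁻ θ in Ioo 0 (2 * π), T.indicator (fun _ => c ^ (q / p)) θ) ^ (1 / q) :=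
        ENNReal.rpow_le_rpow (setLIntegral_mono' measurableSet_Ioo houter) (by positivity)
    _ ≤ (c ^ (q / p) * volume T) ^ (1 / q) :=
        ENNReal.rpow_le_rpow
          ((setLIntegral_le_lintegral _ _).trans (lintegral_indicator_const_le _ _))
          (by positivity)
    _ = c ^ (1 / p) * volume T ^ (1 / q) := by
        rw [ENNReal.mul_rpow_of_nonneg _ _ (by positivity), ← ENNReal.rpow_mul]
        congr 2
        field_simp

theorem test_function_restricted_estimate_general (p q : ℝ) (hp : 1 ≤ p) (hq : 1 ≤ q)
    (γ : ℝ) (η : ℝ) (hη : η ∈ Set.Ioo (0:ℝ) 1) :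
    ∃ C > (0:ℝ), ∀ G : Set ℂ, MeasurableSet G → G ⊆ unitDisc → ∀ α ∈ unitDisc,
      tentNorm p q (Set.indicator (G ∩ pDisc α η) (testFun p q γ α)) ≤
        ENNReal.ofReal C * (mA (G ∩ pDisc α η) / mA (pDisc α η)) ^ ((1:ℝ) / p) := by
  have hp0 : 0 < p := one_pos.trans_le hp
  have hq0 : 0 < q := one_pos.trans_le hq
  have hη' : 0 < 1 - η := sub_pos.2 hη.2
  have hη2 : 0 < 1 - η ^ 2 := by nlinarith [hη.1]
  set A := (2 ^ |γ - 1 / p - 1 / q| * (2 / (1 - η)) ^ |γ|) ^ p * (4 / (1 - η ^ 2))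
  set B := 44 * π / (1 - η)
  set D := (2 / (1 - η)) ^ 2
  have hA : 0 < A := by positivity
  have hB : 0 < B := by positivity
  have hD : 0 < D := by positivity
  refine ⟨(A * D) ^ (1 / p) * B ^ (1 / q), by positivity, fun G hG _ α hα => ?_⟩
  have hα1 : ‖α‖ < 1 := by simpa [unitDisc] using hα
  set E := G ∩ pDisc α η
  set d := 1 - ‖α‖
  calc tentNorm p q (E.indicator (testFun p q γ α))
      ≤ (ENNReal.ofReal (A * d ^ (-(2 + p / q))) * mA E) ^ (1 / p) *
          volume {θ ∈ Ioo 0 (2 * π) | (pDisc α η ∩ coneRegion (1 / 2) (exp (θ * I))).Nonempty}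
            ^ (1 / q) :=
        tentNormOn_indicator_le hp0 hq0 (hG.inter (measurableSet_pDisc α η))
          (fun z hz => norm_testFun_rpow_div_le_of_mem_pDisc hα1 hz.2 hp0 q γ hη.2)
          (fun θ hθ ⟨w, ⟨_, hwΔ⟩, hwΓ, _⟩ => ⟨hθ, w, hwΔ, hwΓ⟩)
    _ ≤ (ENNReal.ofReal (A * d ^ (-(2 + p / q))) * mA E) ^ (1 / p) *
          ENNReal.ofReal (B * d) ^ (1 / q) := by
        gcongr
        exact volume_setOf_pDisc_inter_coneRegion_nonempty_le hα1 hη.2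
    _ = ENNReal.ofReal ((A * D) ^ (1 / p) * B ^ (1 / q)) *
          (mA E / ENNReal.ofReal (D * d ^ 2)) ^ (1 / p) :=
        ofReal_rpow_mul_ofReal_rpow_eq hA.le hB.le hD (sub_pos.2 hα1) hp0 hq0 _
    _ ≤ _ := by
        gcongr
        exact mA_pDisc_le hα1 hη.2

/-- for the test functions `f_α`,
`‖f_α χ_{G ∩ Δ(α,η)}‖_{T_p^q} ≤ C (m(G ∩ Δ(α,η))/m(Δ(α,η)))^{1/p}` with `C` independent
of `α` and of the measurable set `G ⊆ 𝔻`. -/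
theorem test_function_restricted_estimate (p q : ℝ) (hp : 1 ≤ p) (hq : 1 ≤ q)
    (lam γ : ℝ) (hlam : max 1 (p / q) < lam) (hγ : (lam + 2) / p < γ)
    (η : ℝ) (hη : η ∈ Set.Ioo (0:ℝ) 1) :
    ∃ C > (0:ℝ), ∀ G : Set ℂ, MeasurableSet G → G ⊆ unitDisc → ∀ α ∈ unitDisc,
      tentNorm p q (Set.indicator (G ∩ pDisc α η) (testFun p q γ α)) ≤
        ENNReal.ofReal C * (mA (G ∩ pDisc α η) / mA (pDisc α η)) ^ ((1:ℝ) / p) :=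
  test_function_restricted_estimate_general p q hp hq γ η hη
end
end

section
/- Let 1 ≤ p, q < ∞, λ > max{1, p/q}, η ∈ (0,1), let G ⊆ 𝔻 be measurable and α ∈ 𝔻. Then there is a constant C > 0, independent of α and G, such that (∫_𝕋 (∫_{G ∩ Δ(α,η)} ((1−|z|²)^λ / |1 − z ξ̄|^λ) dm(z))^{q/p} |dξ|)^{p/q} ≤ C · m(G ∩ Δ(α,η)) · (1−|α|)^{p/q}. -/
open MeasureTheory Complex Set
open scoped Real ENNReal

noncomputable section

/-!
For `z ∈ Δ(α,η)` the identity `|1 - ᾱz|² - |α - z|² = (1 - |α|²)(1 - |z|²)` makes `1 - |z|`,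
`1 - |α|` and `|1 - ᾱz|` comparable, whence `(1 - |z|²)/|1 - zξ̄| ≲ (1 - |α|)/|1 - αξ̄|` on the
circle, and the inner integral is `≲ ((1 - |α|)/|1 - αξ̄|)^λ m(G ∩ Δ(α,η))`. With `s = λq/p > 1`,
`|1 - αξ̄| ≳ (1 - |α|) + |arg ξ - arg α|` gives `∫_𝕋 ((1 - |α|)/|1 - αξ̄|)^s |dξ| ≲ 1 - |α|`,
and the exponents combine to `(1 - |α|)^{p/q}`.
-/

open ComplexConjugate

lemma one_sub_norm_le_norm_one_sub_mul (w : ℂ) {ζ : ℂ} (hζ : ‖ζ‖ ≤ 1) :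
    1 - ‖w‖ ≤ ‖1 - w * ζ‖ := by
  have h := norm_sub_norm_le (1 : ℂ) (w * ζ)
  rw [norm_one, norm_mul] at h
  nlinarith [norm_nonneg w]

lemma lintegral_comp_div (f : ℝ → ℝ≥0∞) {a : ℝ} (ha : 0 < a) :
    ∫⁻ t, f (t / a) = ENNReal.ofReal a * ∫⁻ t, f t := by
  have h := lintegral_map_equiv f (Homeomorph.mulLeft₀ a⁻¹ (inv_ne_zero ha.ne')).toMeasurableEquiv
    (μ := volume)
  simp only [Homeomorph.toMeasurableEquiv_coe, Homeomorph.coe_mulLeft₀] at h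
  rw [Real.map_volume_mul_left (inv_ne_zero ha.ne'), lintegral_smul_measure, smul_eq_mul, inv_inv,
    abs_of_pos ha] at h
  simp_rw [div_eq_inv_mul, ← h]

lemma lintegral_rpow_rpow_inv_le {X : Type*} [MeasurableSpace X] {μ : Measure X} {s : Set X}
    {f M : X → ℝ≥0∞} {k m c : ℝ≥0∞} {lam r : ℝ} (hM : Measurable M) (hlam : 0 ≤ lam)
    (hr : 0 < r) (hf : ∀ x, f x ≤ (k * M x) ^ lam * m)
    (hc : ∫⁻ x in s, M x ^ (lam * r) ∂μ ≤ c) :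
    (∫⁻ x in s, f x ^ r ∂μ) ^ r⁻¹ ≤ k ^ lam * m * c ^ r⁻¹ := by
  calc (∫⁻ x in s, f x ^ r ∂μ) ^ r⁻¹
      ≤ (∫⁻ x in s, k ^ (lam * r) * m ^ r * M x ^ (lam * r) ∂μ) ^ r⁻¹ := by
        gcongr with x
        calc f x ^ r ≤ ((k * M x) ^ lam * m) ^ r := ENNReal.rpow_le_rpow (hf x) hr.le
          _ = _ := by
            rw [ENNReal.mul_rpow_of_nonneg _ _ hr.le, ENNReal.mul_rpow_of_nonneg _ _ hlam,
              ENNReal.mul_rpow_of_nonneg _ _ hr.le, ← ENNReal.rpow_mul, ← ENNReal.rpow_mul]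
            ring
    _ ≤ (k ^ (lam * r) * m ^ r * c) ^ r⁻¹ := by
        rw [lintegral_const_mul _ (hM.pow_const _)]
        gcongr
    _ = k ^ lam * m * c ^ r⁻¹ := by
        rw [ENNReal.mul_rpow_of_nonneg _ _ (by positivity),
          ENNReal.mul_rpow_of_nonneg _ _ (by positivity), ← ENNReal.rpow_mul, ← ENNReal.rpow_mul,
          mul_inv_cancel_right₀ hr.ne', mul_inv_cancel₀ hr.ne', ENNReal.rpow_one]

section PseudohyperbolicDisc

variable {α z : ℂ} {η : ℝ}

lemma one_sub_sq_mul_norm_sq_le_of_mem_pDisc (hα : ‖α‖ < 1) (hz : z ∈ pDisc α η) :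
    (1 - η ^ 2) * ‖1 - conj α * z‖ ^ 2 ≤ (1 - ‖α‖ ^ 2) * (1 - ‖z‖ ^ 2) := by
  have hz1 : ‖z‖ < 1 := mem_ball_zero_iff.mp hz.1
  have hD : 0 < ‖1 - conj α * z‖ := by
    have := one_sub_norm_le_norm_one_sub_mul (conj α) hz1.le
    rw [Complex.norm_conj] at this
    linarith
  have hlt : ‖α - z‖ < η * ‖1 - conj α * z‖ := by
    rw [← div_lt_iff₀ hD, ← norm_div]
    exact hz.2
  have hsq : ‖α - z‖ ^ 2 ≤ η ^ 2 * ‖1 - conj α * z‖ ^ 2 := by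
    rw [← mul_pow]
    exact pow_le_pow_left₀ (norm_nonneg _) hlt.le 2
  linarith [norm_one_sub_conj_mul_sq_sub_norm_sub_sq α z]

lemma one_sub_norm_comparable_of_mem_pDisc (hη : η ≤ 1) (hα : ‖α‖ < 1) (hz : z ∈ pDisc α η) :
    (1 - η ^ 2) * (1 - ‖α‖) ≤ 4 * (1 - ‖z‖) ∧ (1 - η ^ 2) * (1 - ‖z‖) ≤ 4 * (1 - ‖α‖) ∧
      (1 - η ^ 2) * ‖z - α‖ ≤ 4 * (1 - ‖α‖) := by
  have hz1 : ‖z‖ < 1 := mem_ball_zero_iff.mp hz.1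
  have hη0 : 0 < η := (norm_nonneg _).trans_lt hz.2
  have hk : 0 ≤ 1 - η ^ 2 := by nlinarith
  have hDα := one_sub_norm_le_norm_one_sub_mul (conj α) hz1.le
  have hDz := one_sub_norm_le_norm_one_sub_mul z (ζ := conj α) (by simpa using hα.le)
  rw [Complex.norm_conj] at hDα
  rw [mul_comm] at hDz
  have hmain := one_sub_sq_mul_norm_sq_le_of_mem_pDisc hα hz
  have hlt : ‖α - z‖ < η * ‖1 - conj α * z‖ := by
    rw [← div_lt_iff₀ (by linarith), ← norm_div]
    exact hz.2
  rw [norm_sub_rev]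
  set k := 1 - η ^ 2
  set D := ‖1 - conj α * z‖
  set x := 1 - ‖α‖
  set y := 1 - ‖z‖
  have hx : 0 < x := by linarith
  have hy : 0 < y := by linarith
  have hkey : k * D ^ 2 ≤ 4 * x * y := by
    have h1 : 1 - ‖α‖ ^ 2 ≤ 2 * x := by nlinarith [norm_nonneg α]
    have h2 : 1 - ‖z‖ ^ 2 ≤ 2 * y := by nlinarith [norm_nonneg z]
    nlinarith [mul_le_mul h1 h2 (by nlinarith [norm_nonneg z]) (by positivity)]
  have hxy : k * x ≤ 4 * y := by
    nlinarith [mul_nonneg (mul_nonneg hk (sub_nonneg.2 hDα)) (add_nonneg hx.le (hx.le.trans hDα))]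
  have hyx : k * y ≤ 4 * x := by
    nlinarith [mul_nonneg (mul_nonneg hk (sub_nonneg.2 hDz)) (add_nonneg hy.le (hy.le.trans hDz))]
  have hkD : k * D ≤ 4 * x := by
    nlinarith [mul_le_mul_of_nonneg_left hyx (mul_nonneg hk (by positivity : (0:ℝ) ≤ 4 * x))]
  refine ⟨hxy, hyx, le_trans ?_ hkD⟩
  exact mul_le_mul_of_nonneg_left (by nlinarith [norm_nonneg (α - z)]) hk

lemma div_norm_one_sub_mul_le_of_mem_pDisc (hη : η < 1) (hα : ‖α‖ < 1) (hz : z ∈ pDisc α η)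
    {ξ : ℂ} (hξ : ‖ξ‖ = 1) :
    (1 - ‖z‖ ^ 2) / ‖1 - z * ξ‖ ≤
      8 / (1 - η ^ 2) * (1 + 16 / (1 - η ^ 2) ^ 2) * ((1 - ‖α‖) / ‖1 - α * ξ‖) := by
  have hz1 : ‖z‖ < 1 := mem_ball_zero_iff.mp hz.1
  obtain ⟨hxy, hyx, hzα⟩ := one_sub_norm_comparable_of_mem_pDisc hη.le hα hz
  have hk : 0 < 1 - η ^ 2 := by nlinarith [(norm_nonneg _).trans_lt hz.2]
  have hDz := one_sub_norm_le_norm_one_sub_mul z hξ.le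
  have hDα := one_sub_norm_le_norm_one_sub_mul α hξ.le
  set k := 1 - η ^ 2
  have hnum : 1 - ‖z‖ ^ 2 ≤ 8 / k * (1 - ‖α‖) := by
    rw [div_mul_eq_mul_div, le_div_iff₀ hk]
    nlinarith [norm_nonneg z]
  have hden : ‖1 - α * ξ‖ ≤ (1 + 16 / k ^ 2) * ‖1 - z * ξ‖ := by
    have htri : ‖1 - α * ξ‖ ≤ ‖1 - z * ξ‖ + ‖z - α‖ := by
      calc ‖1 - α * ξ‖ = ‖(1 - z * ξ) + (z - α) * ξ‖ := by ring_nf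
        _ ≤ ‖1 - z * ξ‖ + ‖(z - α) * ξ‖ := norm_add_le _ _
        _ = ‖1 - z * ξ‖ + ‖z - α‖ := by rw [norm_mul, hξ, mul_one]
    have hfar : ‖z - α‖ ≤ 16 / k ^ 2 * ‖1 - z * ξ‖ := by
      rw [div_mul_eq_mul_div, le_div_iff₀ (by positivity)]
      nlinarith [mul_le_mul_of_nonneg_left hzα hk.le]
    linarith
  rw [mul_div_assoc', le_div_iff₀ (by linarith), div_mul_eq_mul_div, div_le_iff₀ (by linarith)]
  calc (1 - ‖z‖ ^ 2) * ‖1 - α * ξ‖ ≤ 8 / k * (1 - ‖α‖) * ((1 + 16 / k ^ 2) * ‖1 - z * ξ‖) :=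
        mul_le_mul hnum hden (norm_nonneg _) (by positivity)
    _ = _ := by ring

lemma setLIntegral_kernel_le_of_subset_pDisc {μ : Measure ℂ} {S : Set ℂ} {lam : ℝ} (hη : η < 1)
    (hlam : 0 ≤ lam) (hα : ‖α‖ < 1) (hS : S ⊆ pDisc α η) {ξ : ℂ} (hξ : ‖ξ‖ = 1) :
    ∫⁻ z in S, ENNReal.ofReal ((1 - ‖z‖ ^ 2) ^ lam / ‖1 - z * ξ‖ ^ lam) ∂μ ≤
      (ENNReal.ofReal (8 / (1 - η ^ 2) * (1 + 16 / (1 - η ^ 2) ^ 2)) *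
        ENNReal.ofReal ((1 - ‖α‖) / ‖1 - α * ξ‖)) ^ lam * μ S := by
  rw [← setLIntegral_const]
  refine setLIntegral_mono measurable_const fun z hz => ?_
  have hz1 : ‖z‖ < 1 := mem_ball_zero_iff.mp (hS hz).1
  have hk : 0 < 1 - η ^ 2 := by nlinarith [(norm_nonneg _).trans_lt (hS hz).2]
  have hnum : 0 ≤ 1 - ‖z‖ ^ 2 := by nlinarith [norm_nonneg z]
  have hK : 0 ≤ 8 / (1 - η ^ 2) * (1 + 16 / (1 - η ^ 2) ^ 2) :=
    mul_nonneg (div_nonneg (by norm_num) hk.le) (by positivity)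
  rw [← Real.div_rpow hnum (norm_nonneg _), ← ENNReal.ofReal_mul hK,
    ENNReal.ofReal_rpow_of_nonneg (by positivity) hlam]
  exact ENNReal.ofReal_le_ofReal (Real.rpow_le_rpow (by positivity)
    (div_norm_one_sub_mul_le_of_mem_pDisc hη hα (hS hz) hξ) hlam)

end PseudohyperbolicDisc

lemma two_div_pi_mul_abs_le_norm_exp_sub_one {t : ℝ} (ht : |t| ≤ π) :
    2 / π * |t| ≤ ‖exp (t * I) - 1‖ := by
  have hsin := Real.mul_abs_le_abs_sin (x := t / 2) (by rw [abs_div, abs_two]; linarith)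
  rw [abs_div, abs_two] at hsin
  rw [mul_comm (t : ℂ), Complex.norm_exp_I_mul_ofReal_sub_one, norm_mul, Real.norm_eq_abs,
    Real.norm_eq_abs, abs_two]
  linarith

lemma norm_one_sub_mul_conj {ζ : ℂ} (hζ : ‖ζ‖ = 1) (α : ℂ) : ‖1 - α * conj ζ‖ = ‖ζ - α‖ := by
  have h : ζ - α = ζ * (1 - α * conj ζ) := by
    rw [mul_sub, mul_one, mul_left_comm, Complex.mul_conj, Complex.normSq_eq_norm_sq, hζ]
    simp
  rw [h, norm_mul, hζ, one_mul]

lemma norm_sub_exp_arg_le {α ζ : ℂ} (hα : ‖α‖ ≤ 1) (hζ : ‖ζ‖ = 1) :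
    ‖ζ - exp (arg α * I)‖ ≤ 2 * ‖1 - α * conj ζ‖ := by
  have hαu : ‖α - exp (arg α * I)‖ = 1 - ‖α‖ := by
    set u := exp (arg α * I)
    nth_rewrite 1 [← Complex.norm_mul_exp_arg_mul_I α]
    rw [← sub_one_mul, norm_mul, Complex.norm_exp_ofReal_mul_I, mul_one, ← Complex.ofReal_one,
      ← Complex.ofReal_sub, Complex.norm_real, Real.norm_eq_abs, abs_sub_comm,
      abs_of_nonneg (by linarith)]
  have hlow := one_sub_norm_le_norm_one_sub_mul α (ζ := conj ζ) (by simp [hζ])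
  rw [norm_one_sub_mul_conj hζ] at hlow ⊢
  linarith [norm_sub_le_norm_sub_add_norm_sub ζ α (exp (arg α * I))]

lemma le_norm_one_sub_mul_conj_exp {α : ℂ} (hα : ‖α‖ ≤ 1) {t : ℝ} (ht : |t| ≤ π) :
    (1 - ‖α‖ + |t|) / (2 * π) ≤ ‖1 - α * conj (exp (↑(arg α + t) * I))‖ := by
  have hζ : ‖exp (↑(arg α + t) * I)‖ = 1 := Complex.norm_exp_ofReal_mul_I _
  have hchord : ‖exp (↑(arg α + t) * I) - exp (arg α * I)‖ = ‖exp (t * I) - 1‖ := by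
    rw [Complex.ofReal_add, add_mul, Complex.exp_add, ← mul_sub_one, norm_mul,
      Complex.norm_exp_ofReal_mul_I, one_mul]
  have hfar := norm_sub_exp_arg_le hα hζ
  rw [hchord] at hfar
  have hnear := one_sub_norm_le_norm_one_sub_mul α (ζ := conj (exp (↑(arg α + t) * I)))
    (by rw [Complex.norm_conj, hζ])
  have hπ : 1 ≤ π := by linarith [Real.pi_gt_three]
  rw [div_le_iff₀ (by positivity)]
  have := two_div_pi_mul_abs_le_norm_exp_sub_one ht
  rw [div_mul_eq_mul_div, div_le_iff₀ Real.pi_pos] at this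
  nlinarith [abs_nonneg t, norm_nonneg α]

lemma ofReal_div_rpow_le {a D t s : ℝ} (ha : 0 < a) (hs : 0 ≤ s) (hD : (a + |t|) / (2 * π) ≤ D) :
    ENNReal.ofReal (a / D) ^ s ≤
      ENNReal.ofReal ((2 * π) ^ s) * ENNReal.ofReal ((1 + ‖t / a‖) ^ (-s)) := by
  have hD0 : 0 < D := lt_of_lt_of_le (by positivity) hD
  have hbase : a / D ≤ 2 * π / (1 + ‖t / a‖) := by
    rw [Real.norm_eq_abs, abs_div, abs_of_pos ha, div_le_div_iff₀ hD0 (by positivity)]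
    rw [div_le_iff₀ (by positivity)] at hD
    field_simp
    nlinarith [Real.pi_pos]
  rw [ENNReal.ofReal_rpow_of_nonneg (by positivity) hs, ← ENNReal.ofReal_mul (by positivity),
    Real.rpow_neg (by positivity), ← div_eq_mul_inv,
    ← Real.div_rpow (by positivity) (by positivity)]
  exact ENNReal.ofReal_le_ofReal (Real.rpow_le_rpow (by positivity) hbase hs)

lemma ofReal_div_norm_one_sub_mul_conj_exp_rpow_le {α : ℂ} (hα : ‖α‖ < 1) {s : ℝ} (hs : 0 ≤ s)
    {θ : ℝ} (hθ : θ ∈ Ioo 0 (2 * π)) :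
    ENNReal.ofReal ((1 - ‖α‖) / ‖1 - α * conj (exp (θ * I))‖) ^ s ≤
      ENNReal.ofReal ((2 * π) ^ s) *
        (ENNReal.ofReal ((1 + ‖(θ - arg α) / (1 - ‖α‖)‖) ^ (-s)) +
          ENNReal.ofReal ((1 + ‖(θ - (arg α + 2 * π)) / (1 - ‖α‖)‖) ^ (-s))) := by
  have ha : 0 < 1 - ‖α‖ := by linarith
  obtain ⟨hθ0, hθ1⟩ := hθ
  -- one of `θ - arg α`, `θ - arg α - 2π` lies in `[-π, π]`
  have hφ : -π < arg α ∧ arg α ≤ π := ⟨neg_pi_lt_arg α, arg_le_pi α⟩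
  rcases le_or_gt (θ - arg α) π with h | h
  · have hbound := le_norm_one_sub_mul_conj_exp hα.le (t := θ - arg α) (abs_le.2 ⟨by linarith, h⟩)
    rw [add_sub_cancel] at hbound
    exact (ofReal_div_rpow_le ha hs hbound).trans (by gcongr; exact le_self_add)
  · have hbound := le_norm_one_sub_mul_conj_exp hα.le (t := θ - (arg α + 2 * π))
      (abs_le.2 ⟨by linarith, by linarith⟩)
    have hper : exp (↑(θ - 2 * π) * I) = exp (θ * I) := by
      rw [← Complex.exp_periodic.sub_eq (θ * I)]
      push_cast
      ring_nf
    rw [show arg α + (θ - (arg α + 2 * π)) = θ - 2 * π by ring, hper] at hbound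
    exact (ofReal_div_rpow_le ha hs hbound).trans (by gcongr; exact le_add_self)

lemma exists_lintegral_rpow_div_norm_one_sub_mul_conj_le {s : ℝ} (hs : 1 < s) :
    ∃ C > 0, ∀ α : ℂ, ‖α‖ < 1 →
      ∫⁻ θ in Ioo 0 (2 * π), ENNReal.ofReal ((1 - ‖α‖) / ‖1 - α * conj (exp (θ * I))‖) ^ s ≤
        ENNReal.ofReal (C * (1 - ‖α‖)) := by
  set F : ℝ → ℝ≥0∞ := fun u => ENNReal.ofReal ((1 + ‖u‖) ^ (-s))
  have hF : Measurable F := by fun_prop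
  have hFfin : ∫⁻ u, F u ≠ ∞ := (finite_integral_one_add_norm (by simpa using hs)).ne
  have hFpos : 0 < ∫⁻ u, F u := by
    rw [lintegral_pos_iff_support hF]
    have : Function.support F = univ := by
      ext u; simp [F, Real.rpow_pos_of_pos (by positivity : (0:ℝ) < 1 + |u|)]
    simp [this]
  refine ⟨2 * (2 * π) ^ s * (∫⁻ u, F u).toReal,
    by have := ENNReal.toReal_pos hFpos.ne' hFfin; positivity, fun α hα => ?_⟩
  set a := 1 - ‖α‖
  have ha : 0 < a := by linarith
  set φ := arg α
  calc ∫⁻ θ in Ioo 0 (2 * π), ENNReal.ofReal (a / ‖1 - α * conj (exp (θ * I))‖) ^ s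
      ≤ ∫⁻ θ in Ioo 0 (2 * π),
          ENNReal.ofReal ((2 * π) ^ s) * (F ((θ - φ) / a) + F ((θ - (φ + 2 * π)) / a)) :=
        setLIntegral_mono' measurableSet_Ioo fun θ hθ =>
          ofReal_div_norm_one_sub_mul_conj_exp_rpow_le hα (by linarith) hθ
    _ ≤ ∫⁻ θ, ENNReal.ofReal ((2 * π) ^ s) * (F ((θ - φ) / a) + F ((θ - (φ + 2 * π)) / a)) :=
        setLIntegral_le_lintegral _ _
    _ = ENNReal.ofReal ((2 * π) ^ s) *
          ((ENNReal.ofReal a * ∫⁻ u, F u) + ENNReal.ofReal a * ∫⁻ u, F u) := by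
        rw [lintegral_const_mul' _ _ ENNReal.ofReal_ne_top, lintegral_add_left (by fun_prop),
          lintegral_sub_right_eq_self (fun θ => F (θ / a)),
          lintegral_sub_right_eq_self (fun θ => F (θ / a)), lintegral_comp_div F ha]
    _ = ENNReal.ofReal (2 * (2 * π) ^ s * (∫⁻ u, F u).toReal * a) := by
        conv_lhs => rw [← ENNReal.ofReal_toReal hFfin]
        rw [← ENNReal.ofReal_mul ha.le, ← ENNReal.ofReal_add (by positivity) (by positivity),
          ← ENNReal.ofReal_mul (by positivity)]
        ring_nf

/-- the kernel estimate
`(∫_𝕋 (∫_{G ∩ Δ(α,η)} (1-|z|²)^λ/|1-zξ̄|^λ dm(z))^{q/p} |dξ|)^{p/q}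
  ≤ C m(G ∩ Δ(α,η)) (1-|α|)^{p/q}` with `C` independent of `α` and `G`. -/
theorem kernel_estimate (p q lam : ℝ) (hp : 1 ≤ p) (hq : 1 ≤ q)
    (hlam : max 1 (p / q) < lam) (η : ℝ) (hη : η ∈ Set.Ioo (0:ℝ) 1) :
    ∃ C > (0:ℝ), ∀ G : Set ℂ, MeasurableSet G → G ⊆ unitDisc → ∀ α ∈ unitDisc,
      (∫⁻ θ in Set.Ioo 0 (2 * Real.pi),
          (∫⁻ z in G ∩ pDisc α η,
              ENNReal.ofReal ((1 - ‖z‖ ^ 2) ^ lam /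
                ‖1 - z * (starRingEnd ℂ) (Complex.exp (θ * Complex.I))‖ ^ lam)
                ∂mA) ^ (q / p)) ^ (p / q) ≤
        ENNReal.ofReal C * mA (G ∩ pDisc α η) *
          ENNReal.ofReal ((1 - ‖α‖) ^ (p / q)) := by
  obtain ⟨hη0, hη1⟩ := hη
  have hp0 : 0 < p := by linarith
  have hq0 : 0 < q := by linarith
  have hlam0 : 0 < lam := zero_lt_one.trans_le (le_max_left _ _) |>.trans hlam
  have hs : 1 < lam * (q / p) :=
    calc 1 = p / q * (q / p) := by field_simp
      _ < lam * (q / p) := by gcongr; exact (le_max_right _ _).trans_lt hlam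
  obtain ⟨C, hC, hcircle⟩ := exists_lintegral_rpow_div_norm_one_sub_mul_conj_le hs
  have hk : 0 < 1 - η ^ 2 := by nlinarith
  set K := 8 / (1 - η ^ 2) * (1 + 16 / (1 - η ^ 2) ^ 2)
  have hK : 0 < K := mul_pos (div_pos (by norm_num) hk) (by positivity)
  refine ⟨K ^ lam * C ^ (p / q), by positivity, fun G _ _ α hα => ?_⟩
  have hα1 : ‖α‖ < 1 := mem_ball_zero_iff.mp hα
  have hbound := lintegral_rpow_rpow_inv_le (s := Ioo 0 (2 * π)) (by fun_prop) hlam0.le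
    (div_pos hq0 hp0) (fun θ => setLIntegral_kernel_le_of_subset_pDisc (μ := mA) hη1 hlam0.le
      hα1 (inter_subset_right (s := G)) (ξ := conj (exp (θ * I))) (by simp)) (hcircle α hα1)
  rw [inv_div] at hbound
  refine hbound.trans_eq ?_
  rw [ENNReal.ofReal_rpow_of_nonneg hK.le hlam0.le, ENNReal.ofReal_rpow_of_nonneg
    (mul_nonneg hC.le (by linarith)) (by positivity), Real.mul_rpow hC.le (by linarith),
    ENNReal.ofReal_mul (by positivity), ENNReal.ofReal_mul (by positivity)]
  ring
end
end
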